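/- arXiv:1106.5800 — 8 statements merged into one kernel-verified Lean document; each statement's English description precedes it below -/
import Mathlib

section
/- Every function f : ℤ → 𝔽_p which is periodic with period pʳ is of the form n ↦ g(n) mod p for some polynomial g ∈ ℤ[binom(T,1), binom(T,p), …, binom(T, p^{r-1})], i.e. a ℤ-polynomial expression in the maps n ↦ binom(n, pⁱ) for 0 ≤ i ≤ r−1. -/
open Finset

section Aux

variable {p : ℕ}

/-- digit formula via Lucas -/
private lemma digit_choose' [hp : Fact p.Prime] (a i : ℕ) :
    ((a.choose (p ^ i) : ℕ) : ZMod p) = ((a / p ^ i % p : ℕ) : ZMod p) := by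
  have h2 : 2 ≤ p := hp.out.two_le
  set N := a + i + 1 with hN
  have haN : a < p ^ N := by
    calc a < 2 ^ a := Nat.lt_two_pow_self
    _ ≤ p ^ N := (Nat.pow_le_pow_left h2 a).trans (Nat.pow_le_pow_right (by omega) (by omega))
  have hiN : p ^ i < p ^ N := Nat.pow_lt_pow_right (by omega) (by omega)
  have hL := Choose.choose_modEq_prod_range_choose (p := p) haN hiN
  have key : ((a.choose (p ^ i) : ℤ) : ZMod p)
      = ((∏ j ∈ range N, ((a / p ^ j % p).choose (p ^ i / p ^ j % p) : ℤ) : ℤ) : ZMod p) := by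
    rw [ZMod.intCast_eq_intCast_iff]
    exact_mod_cast hL
  push_cast at key ⊢
  rw [key, Finset.prod_eq_single i]
  · have h1 : p ^ i / p ^ i % p = 1 := by
      rw [Nat.div_self (pow_pos (by omega) i)]
      exact Nat.mod_eq_of_lt (by omega)
    simp [h1]
  · intro j hj hji
    rcases lt_or_gt_of_ne hji with h | h
    · have hd : p ^ i / p ^ j = p ^ (i - j) := Nat.pow_div h.le (by omega)
      have h0 : p ^ (i - j) % p = 0 :=
        Nat.mod_eq_zero_of_dvd (dvd_pow_self p (by omega))
      simp [hd, h0]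
    · have h0 : p ^ i / p ^ j = 0 := Nat.div_eq_of_lt (Nat.pow_lt_pow_right (by omega) h)
      simp [h0]
  · intro h; exact absurd (Finset.mem_range.mpr (by omega)) h

/-- `Ring.choose` is periodic mod p with period `p^r`, for `k < p^r`. -/
private lemma choose_add_pow' [hp : Fact p.Prime] (n : ℤ) (r k : ℕ) (hk : k < p ^ r) :
    ((Ring.choose (n + (p : ℤ) ^ r) k : ℤ) : ZMod p) = ((Ring.choose n k : ℤ) : ZMod p) := by
  rw [Ring.add_choose_eq k (Commute.all _ _)]
  push_cast
  rw [Finset.sum_eq_single (k, 0)]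
  · simp [Ring.choose_zero_right]
  · rintro ⟨a, b⟩ hab hne
    have hab' : a + b = k := Finset.HasAntidiagonal.mem_antidiagonal.mp hab
    have hb : b ≠ 0 := by rintro rfl; exact hne (by simp [← hab'])
    have : ((p : ℤ) ^ r) = ((p ^ r : ℕ) : ℤ) := by push_cast; ring
    rw [this, Ring.choose_natCast]
    have hdvd : (p : ℤ) ∣ ((p ^ r).choose b : ℤ) := by
      exact_mod_cast Int.natCast_dvd_natCast.mpr
        (hp.out.dvd_choose_pow hb (by omega))
    have : (((p ^ r).choose b : ℤ) : ZMod p) = 0 := by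
      rcases hdvd with ⟨c, hc⟩
      simp [hc]
    push_cast at this
    simp [this]
  · intro h
    exact absurd (Finset.HasAntidiagonal.mem_antidiagonal.mpr (by simp)) h

/-- A function with one-step period `c` is invariant under adding any multiple of `c`. -/
private lemma shift_invariant' {α : Type*} (F : ℤ → α) (c : ℤ) (h : ∀ n, F (n + c) = F n)
    (m : ℤ) (n : ℤ) : F (n + m * c) = F n := by
  induction m using Int.induction_on with
  | zero => simp
  | succ k ih =>
      have h1 : n + ((k : ℤ) + 1) * c = (n + k * c) + c := by ring
      rw [h1, h, ih]
  | pred k ih =>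
      have h1 : (n + (-(k : ℤ) - 1) * c) + c = n + (-(k : ℤ)) * c := by ring
      have := h (n + (-(k : ℤ) - 1) * c)
      rw [h1] at this
      rw [← ih, ← this]

/-- base-p digit expansion -/
private lemma digits_sum' (h2 : 2 ≤ p) :
    ∀ r a : ℕ, a < p ^ r → a = ∑ i ∈ range r, a / p ^ i % p * p ^ i := by
  intro r
  induction r with
  | zero => intro a ha; simpa using Nat.lt_one_iff.mp (by simpa using ha)
  | succ r ih =>
      intro a ha
      have hdiv : a / p < p ^ r := by
        rw [Nat.div_lt_iff_lt_mul (by omega)]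
        calc a < p ^ (r + 1) := ha
        _ = p ^ r * p := by ring
      have hrec := ih (a / p) hdiv
      rw [Finset.sum_range_succ']
      have hterm : ∀ i, a / p ^ (i + 1) % p * p ^ (i + 1)
          = p * ((a / p) / p ^ i % p * p ^ i) := by
        intro i
        have : a / p ^ (i + 1) = (a / p) / p ^ i := by
          rw [pow_succ', Nat.div_div_eq_div_mul]
        rw [this]; ring
      have hsum : ∑ i ∈ range r, a / p ^ (i + 1) % p * p ^ (i + 1)
          = p * ∑ i ∈ range r, (a / p) / p ^ i % p * p ^ i := by
        rw [Finset.mul_sum]; exact Finset.sum_congr rfl fun i _ => hterm i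
      rw [hsum, ← hrec, pow_zero, Nat.div_one, mul_one]
      exact (Nat.div_add_mod a p).symm

/-- injectivity of digits mod p -/
private lemma digits_inj' [hp : Fact p.Prime] {r a b : ℕ} (ha : a < p ^ r) (hb : b < p ^ r)
    (h : ∀ i, i < r → ((a / p ^ i % p : ℕ) : ZMod p) = ((b / p ^ i % p : ℕ) : ZMod p)) :
    a = b := by
  have h2 : 2 ≤ p := hp.out.two_le
  have hdig : ∀ i, i < r → a / p ^ i % p = b / p ^ i % p := by
    intro i hi
    have h1 : a / p ^ i % p < p := Nat.mod_lt _ (by omega)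
    have h2' : b / p ^ i % p < p := Nat.mod_lt _ (by omega)
    have := congrArg ZMod.val (h i hi)
    rwa [ZMod.val_natCast_of_lt h1, ZMod.val_natCast_of_lt h2'] at this
  rw [digits_sum' h2 r a ha, digits_sum' h2 r b hb]
  exact Finset.sum_congr rfl fun i hi => by rw [hdig i (Finset.mem_range.mp hi)]

/-- indicator polynomial trick -/
private lemma indicator' [hp : Fact p.Prime] (x c : ZMod p) :
    1 - (x - c) ^ (p - 1) = if x = c then 1 else 0 := by
  have h2 : 2 ≤ p := hp.out.two_le
  split_ifs with h
  · subst h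
    rw [sub_self, zero_pow (by omega)]
    ring
  · rw [ZMod.pow_card_sub_one_eq_one (sub_ne_zero.mpr h)]
    ring

end Aux

/-- Every function `f : ℤ → 𝔽_p` which is periodic with period `pʳ` is of the form
`n ↦ g(binom(n,1), binom(n,p), …, binom(n, p^{r-1})) mod p` for some polynomial
`g ∈ ℤ[Q₀, …, Q_{r-1}]`, i.e. a ℤ-polynomial expression in the maps `n ↦ binom(n, pⁱ)`
for `0 ≤ i ≤ r−1`. -/
theorem periodic_is_poly_in_binomials (p : ℕ) [Fact p.Prime] (r : ℕ)
    (f : ℤ → ZMod p) (hf : ∀ n : ℤ, f (n + (p : ℤ) ^ r) = f n) :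
    ∃ g : MvPolynomial (Fin r) ℤ, ∀ n : ℤ,
      f n = ((MvPolynomial.eval (fun i : Fin r => Ring.choose n (p ^ (i : ℕ))) g : ℤ) : ZMod p) := by
  classical
  have hp : Fact p.Prime := inferInstance
  have h2 : 2 ≤ p := hp.out.two_le
  -- the "digit vector" maps
  set e : ℤ → Fin r → ZMod p := fun n i => ((Ring.choose n (p ^ (i : ℕ)) : ℤ) : ZMod p) with he
  set v : ℕ → Fin r → ZMod p := fun a i => ((a / p ^ (i : ℕ) % p : ℕ) : ZMod p) with hv
  -- f and e only depend on n mod p^r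
  have hfshift : ∀ (m n : ℤ), f (n + m * (p : ℤ) ^ r) = f n :=
    shift_invariant' f ((p : ℤ) ^ r) hf
  have heshift : ∀ (m n : ℤ), e (n + m * (p : ℤ) ^ r) = e n := by
    intro m n
    funext i
    have hk : p ^ (i : ℕ) < p ^ r := Nat.pow_lt_pow_right (by omega) i.isLt
    exact shift_invariant' (fun n => e n i) ((p : ℤ) ^ r)
      (fun n => choose_add_pow' n r (p ^ (i : ℕ)) hk) m n
  -- on naturals, e agrees with the digits
  have hev : ∀ a : ℕ, e (a : ℤ) = v a := by
    intro a
    funext i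
    show ((Ring.choose (a : ℤ) (p ^ (i : ℕ)) : ℤ) : ZMod p) = _
    rw [Ring.choose_natCast]
    exact_mod_cast digit_choose' a (i : ℕ)
  -- the polynomial over ZMod p
  set g' : MvPolynomial (Fin r) (ZMod p) :=
    ∑ a ∈ range (p ^ r), MvPolynomial.C (f (a : ℤ)) *
      ∏ i : Fin r, (1 - (MvPolynomial.X i - MvPolynomial.C (v a i)) ^ (p - 1)) with hg'
  -- evaluation of g'
  have heval : ∀ x : Fin r → ZMod p,
      MvPolynomial.eval x g' = ∑ a ∈ range (p ^ r), f (a : ℤ) * (if x = v a then 1 else 0) := by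
    intro x
    rw [hg', map_sum]
    refine Finset.sum_congr rfl fun a _ => ?_
    rw [map_mul, MvPolynomial.eval_C, map_prod]
    congr 1
    have hfac : ∀ i : Fin r,
        MvPolynomial.eval x (1 - (MvPolynomial.X i - MvPolynomial.C (v a i)) ^ (p - 1))
          = if x i = v a i then 1 else 0 := by
      intro i
      simp only [map_sub, map_one, map_pow, MvPolynomial.eval_X, MvPolynomial.eval_C]
      exact indicator' (x i) (v a i)
    simp only [hfac]
    by_cases h : x = v a
    · simp [h]
    · obtain ⟨i, hi⟩ := Function.ne_iff.mp h
      rw [if_neg h]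
      exact Finset.prod_eq_zero (Finset.mem_univ i) (if_neg hi)
  -- key: f n = eval (e n) g'
  have hkey : ∀ n : ℤ, f n = MvPolynomial.eval (e n) g' := by
    intro n
    set b : ℤ := (p : ℤ) ^ r with hb
    have hbpos : 0 < b := by positivity
    set n₀ : ℤ := n % b with hn₀
    have hmod : n₀ + (n / b) * b = n := by
      rw [hn₀, mul_comm]; exact Int.emod_add_mul_ediv n b
    have hfn : f n = f n₀ := by rw [← hmod, hfshift]
    have hen : e n = e n₀ := by rw [← hmod, heshift]
    have hn₀nonneg : 0 ≤ n₀ := Int.emod_nonneg n (by omega)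
    have hn₀lt : n₀ < b := Int.emod_lt_of_pos n hbpos
    set a₀ : ℕ := n₀.toNat with ha₀
    have ha₀n : (a₀ : ℤ) = n₀ := Int.toNat_of_nonneg hn₀nonneg
    have ha₀lt : a₀ < p ^ r := by
      have : (a₀ : ℤ) < ((p ^ r : ℕ) : ℤ) := by rw [ha₀n]; push_cast; exact hn₀lt
      exact_mod_cast this
    have hen' : e n = v a₀ := by rw [hen, ← ha₀n, hev]
    rw [hfn, ← ha₀n, heval, Finset.sum_eq_single a₀]
    · rw [hen', if_pos rfl, mul_one]
    · intro a ha hne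
      have : e n ≠ v a := by
        rw [hen']
        intro hcontra
        exact hne (digits_inj' (Finset.mem_range.mp ha) ha₀lt
          (fun i hi => (congrFun hcontra ⟨i, hi⟩).symm))
      rw [if_neg this, mul_zero]
    · intro h; exact absurd (Finset.mem_range.mpr ha₀lt) h
  -- lift g' to ℤ
  obtain ⟨g, hg⟩ := MvPolynomial.map_surjective (Int.castRingHom (ZMod p))
    ZMod.intCast_surjective g'
  refine ⟨g, fun n => ?_⟩
  rw [hkey n, ← hg]
  have : ((MvPolynomial.eval (fun i : Fin r => Ring.choose n (p ^ (i : ℕ))) g : ℤ) : ZMod p)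
      = MvPolynomial.eval (e n) (MvPolynomial.map (Int.castRingHom (ZMod p)) g) := by
    have hcomp := MvPolynomial.eval₂_comp_left (Int.castRingHom (ZMod p)) (RingHom.id ℤ)
      (fun i : Fin r => Ring.choose n (p ^ (i : ℕ))) g
    rw [MvPolynomial.eval₂_id] at hcomp
    rw [MvPolynomial.eval_map]
    exact hcomp.trans (by rw [RingHom.comp_id]; rfl)
  rw [this]
end

section
/- If σ is an element of the strictly triangular permutation group 𝔹_n(𝔽_p) fixing the first m coordinates, then σᵖ fixes the first m+1 coordinates. -/
/-- A permutation of `𝔽_p^n` is strictly triangular if its `i`-th component is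
`x_i + g_i(x_1, …, x_{i-1})`, i.e. `σ x i - x i` depends only on the coordinates `j < i`
(every function of finitely many `𝔽_p`-variables being polynomial). -/
def StrictlyTriangular (p n : ℕ) (σ : Equiv.Perm (Fin n → ZMod p)) : Prop :=
  ∀ x y : Fin n → ZMod p, ∀ i : Fin n, (∀ j : Fin n, j < i → x j = y j) →
    σ x i - x i = σ y i - y i

/-- `σ` fixes the first `m` coordinates of `𝔽_p^n`. -/
def FixesFirst (p n m : ℕ) (σ : Equiv.Perm (Fin n → ZMod p)) : Prop :=
  ∀ x : Fin n → ZMod p, ∀ i : Fin n, (i : ℕ) < m → σ x i = x i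

/-- If `σ ∈ 𝔹_n(𝔽_p)` fixes the first `m` coordinates, then `σ^p` fixes the first
`m + 1` coordinates. -/
theorem pow_p_fixes_one_more (p n m : ℕ) [Fact p.Prime]
    (σ : Equiv.Perm (Fin n → ZMod p))
    (hσ : StrictlyTriangular p n σ) (hm : FixesFirst p n m σ) :
    FixesFirst p n (m + 1) (σ ^ p) := by
  intro x i hi
  have hfix : ∀ k : ℕ, ∀ y : Fin n → ZMod p, ∀ j : Fin n, (j : ℕ) < m → (σ ^ k) y j = y j := by
    intro k
    induction k with
    | zero => intro y j hj; simp
    | succ k ih =>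
      intro y j hj
      rw [pow_succ, Equiv.Perm.mul_apply, ih _ _ hj, hm _ _ hj]
  rcases Nat.lt_succ_iff_lt_or_eq.mp hi with h | h
  · exact hfix p x i h
  · have key : ∀ k : ℕ, (σ ^ k) x i = x i + (k : ℕ) • (σ x i - x i) := by
      intro k
      induction k with
      | zero => simp
      | succ k ih =>
        rw [pow_succ', Equiv.Perm.mul_apply]
        have h1 : σ ((σ ^ k) x) i - (σ ^ k) x i = σ x i - x i := by
          apply hσ
          intro j hj
          have : (j : ℕ) < m := by
            have := (Fin.lt_iff_val_lt_val.mp hj); omega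
          exact hfix k x j this
        have h2 : σ ((σ ^ k) x) i = (σ ^ k) x i + (σ x i - x i) := by
          have := eq_add_of_sub_eq h1
          rw [this]; ring
        rw [h2, ih, succ_nsmul]; ring
    rw [key p]
    simp [nsmul_eq_mul, ZMod.natCast_self]
end

section
/- The order of the strictly triangular permutation group 𝔹_n(𝔽_p) is p^{(pⁿ−1)/(p−1)}; in particular, 𝔹_n(𝔽_p) is a p-Sylow subgroup of the symmetric group on 𝔽_p^n. -/
namespace TriAux

variable (p n : ℕ) [Fact p.Prime]

/-- Extend a vector indexed by `Fin i` to one indexed by `Fin n`, padding with `0`. -/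
def ext (i : Fin n) (v : Fin i → ZMod p) : Fin n → ZMod p :=
  fun j => if h : (j : ℕ) < (i : ℕ) then v ⟨j, h⟩ else 0

/-- Restrict a vector indexed by `Fin n` to the first `i` coordinates. -/
def restr (i : Fin n) (x : Fin n → ZMod p) : Fin i → ZMod p :=
  fun j => x ⟨j, j.2.trans i.2⟩

lemma restr_ext (i : Fin n) (v : Fin i → ZMod p) : restr p n i (ext p n i v) = v := by
  funext j
  simp [restr, ext, j.2]

lemma ext_lt (i : Fin n) (v : Fin i → ZMod p) (j : Fin n) (h : j < i) :
    ext p n i v j = v ⟨j, h⟩ := by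
  simp [ext, h]

/-- The map sending a strictly triangular permutation to its family of "increments". -/
def Φ (σ : {σ : Equiv.Perm (Fin n → ZMod p) // StrictlyTriangular p n σ}) :
    ∀ i : Fin n, (Fin i → ZMod p) → ZMod p :=
  fun i v => σ.1 (ext p n i v) i - ext p n i v i

lemma Φ_spec (σ : {σ : Equiv.Perm (Fin n → ZMod p) // StrictlyTriangular p n σ})
    (x : Fin n → ZMod p) (i : Fin n) :
    σ.1 x i - x i = Φ p n σ i (restr p n i x) := by
  have := σ.2 x (ext p n i (restr p n i x)) i ?_
  · rw [this]; rfl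
  · intro j hj
    rw [ext_lt p n i _ j hj]
    rfl

lemma Φ_injective : Function.Injective (Φ p n) := by
  intro σ τ h
  have key : ∀ x i, σ.1 x i = τ.1 x i := by
    intro x i
    have h1 := Φ_spec p n σ x i
    have h2 := Φ_spec p n τ x i
    rw [h] at h1
    have := h1.trans h2.symm
    have := congrArg (· + x i) this
    simpa [sub_add_cancel] using this
  apply Subtype.ext
  apply Equiv.ext
  intro x
  funext i
  exact key x i

lemma Φ_surjective : Function.Surjective (Φ p n) := by
  intro g
  -- define the underlying function
  set f : (Fin n → ZMod p) → (Fin n → ZMod p) :=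
    fun x i => x i + g i (restr p n i x) with hf
  have hinj : Function.Injective f := by
    intro x y hxy
    have key : ∀ m : ℕ, ∀ i : Fin n, (i : ℕ) = m → x i = y i := by
      intro m
      induction m using Nat.strong_induction_on with
      | _ m ih =>
        intro i him
        have hr : restr p n i x = restr p n i y := by
          funext j
          exact ih j (him ▸ j.2) ⟨j, j.2.trans i.2⟩ rfl
        have := congrFun hxy i
        rw [hf] at this
        simp only at this
        rw [hr] at this
        exact add_right_cancel this
    funext i
    exact key i i rfl
  have hbij : Function.Bijective f := Finite.injective_iff_bijective.mp hinj
  set σ : Equiv.Perm (Fin n → ZMod p) := Equiv.ofBijective f hbij with hσ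
  have hσapp : ∀ x, σ x = f x := fun x => rfl
  have hST : StrictlyTriangular p n σ := by
    intro x y i hxy
    have hr : restr p n i x = restr p n i y := by
      funext j
      exact hxy ⟨j, j.2.trans i.2⟩ j.2
    rw [hσapp, hσapp, hf]
    simp only
    rw [hr]
    ring
  refine ⟨⟨σ, hST⟩, ?_⟩
  funext i v
  show σ (ext p n i v) i - ext p n i v i = g i v
  rw [hσapp, hf]
  simp only
  rw [restr_ext]
  ring

noncomputable def triEquiv :
    {σ : Equiv.Perm (Fin n → ZMod p) // StrictlyTriangular p n σ} ≃
      (∀ i : Fin n, (Fin i → ZMod p) → ZMod p) :=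
  Equiv.ofBijective (Φ p n) ⟨Φ_injective p n, Φ_surjective p n⟩

end TriAux

/-- The order of the strictly triangular permutation group `𝔹_n(𝔽_p)` is
`p^((pⁿ−1)/(p−1))`; in particular, since this is exactly the `p`-adic valuation of
`(pⁿ)!`, the group `𝔹_n(𝔽_p)` is a `p`-Sylow subgroup of the symmetric group on `𝔽_p^n`. -/
theorem tri_group_card_sylow (p n : ℕ) [Fact p.Prime] :
    Nat.card {σ : Equiv.Perm (Fin n → ZMod p) // StrictlyTriangular p n σ} =
      p ^ ((p ^ n - 1) / (p - 1)) ∧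
    (Nat.factorial (p ^ n)).factorization p = (p ^ n - 1) / (p - 1) := by
  have hp : p.Prime := Fact.out
  have hp2 : 2 ≤ p := hp.two_le
  have hgeom : ∑ k ∈ Finset.range n, p ^ k = (p ^ n - 1) / (p - 1) := Nat.geomSum_eq hp2 n
  constructor
  · rw [Nat.card_congr (TriAux.triEquiv p n), Nat.card_pi]
    have hcard : ∀ i : Fin n, Nat.card ((Fin (i : ℕ) → ZMod p) → ZMod p) = p ^ p ^ (i : ℕ) := by
      intro i
      rw [Nat.card_fun, Nat.card_fun, Nat.card_zmod, Nat.card_eq_fintype_card, Fintype.card_fin]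
    rw [Finset.prod_congr rfl (fun i _ => hcard i), Finset.prod_pow_eq_pow_sum, ← hgeom]
    congr 1
    exact (Finset.sum_range fun k => p ^ k).symm
  · rw [Nat.factorization_def _ hp,
      padicValNat_factorial (b := n + 1) (by rw [Nat.log_pow hp2]; omega)]
    rw [← hgeom]
    have hdiv : ∀ i ∈ Finset.Ico 1 (n + 1), p ^ n / p ^ i = p ^ (n - i) := by
      intro i hi
      simp only [Finset.mem_Ico] at hi
      rw [Nat.pow_div (by omega) hp.pos]
    rw [Finset.sum_congr rfl hdiv, Finset.sum_Ico_eq_sum_range]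
    simp only [Nat.add_sub_cancel]
    rw [← Finset.sum_range_reflect]
    apply Finset.sum_congr rfl
    intro i hi
    simp only [Finset.mem_range] at hi
    congr 1
    omega
end

section
/- For any permutation σ of 𝔽_p^n with a single orbit of length pⁿ, the image of σ* − id on the function space R_n = Maps(𝔽_p^n, 𝔽_p) is a codimension-1 subspace (of dimension pⁿ − 1); for strictly triangular σ this image equals R_n⁻, the span of all monomials x^α with α ≠ (p−1,…,p−1). -/
open Finset Module

section Aux
variable (p n : ℕ) [Fact p.Prime]

/-- The sum functional on the function space. -/
def sumL : ((Fin n → ZMod p) → ZMod p) →ₗ[ZMod p] ZMod p where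
  toFun f := ∑ x, f x
  map_add' f g := by simp [Finset.sum_add_distrib]
  map_smul' c f := by simp [Finset.mul_sum]

lemma sumL_apply (f : (Fin n → ZMod p) → ZMod p) : sumL p n f = ∑ x, f x := rfl

lemma sum_pow_eq_neg_one : ∑ x : ZMod p, x ^ (p - 1) = -1 := by
  classical
  have hp : p.Prime := Fact.out
  have h0 : (0 : ZMod p) ^ (p - 1) = 0 := zero_pow (by have := hp.two_le; omega)
  rw [← Finset.add_sum_erase _ _ (Finset.mem_univ (0 : ZMod p)), h0, zero_add]
  rw [Finset.sum_congr rfl (fun x hx => ZMod.pow_card_sub_one_eq_one (Finset.ne_of_mem_erase hx))]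
  rw [Finset.sum_const, nsmul_one, Finset.card_erase_of_mem (Finset.mem_univ 0),
    Finset.card_univ, ZMod.card, Nat.cast_sub hp.one_le, ZMod.natCast_self, Nat.cast_one, zero_sub]

lemma sum_prod_pow (e : Fin n → ℕ) :
    ∑ x : Fin n → ZMod p, ∏ i, x i ^ e i = ∏ i, ∑ t : ZMod p, t ^ e i := by
  classical
  rw [← Fintype.piFinset_univ]
  exact (Finset.prod_univ_sum (fun _ => Finset.univ) (fun i t => t ^ e i)).symm

lemma monomial_span_top :
    Submodule.span (ZMod p) {f : (Fin n → ZMod p) → ZMod p |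
      ∃ α : Fin n → Fin p, f = fun x => ∏ i, x i ^ (α i : ℕ)} = ⊤ := by
  classical
  have hp : p.Prime := Fact.out
  rw [eq_top_iff]
  intro g _
  have hg : g ∈ (MvPolynomial.restrictDegree (Fin n) (ZMod p)
      (Fintype.card (ZMod p) - 1)).map (MvPolynomial.evalₗ (ZMod p) (Fin n)) := by
    rw [MvPolynomial.map_restrict_dom_evalₗ]; trivial
  obtain ⟨P, hP, hPg⟩ := Submodule.mem_map.mp hg
  have hgeq : g = ∑ d ∈ P.support,
      (P.coeff d) • (fun x : Fin n → ZMod p => ∏ i, x i ^ d i) := by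
    funext x
    have : g x = MvPolynomial.eval x P := by rw [← hPg]; rfl
    rw [this, MvPolynomial.eval_eq']
    simp [Finset.sum_apply]
  rw [hgeq]
  refine Submodule.sum_mem _ fun d hd => Submodule.smul_mem _ _ (Submodule.subset_span ?_)
  have hdlt : ∀ i, d i < p := by
    intro i
    have := ((MvPolynomial.mem_restrictDegree _ P _).mp hP) d hd i
    rw [ZMod.card] at this
    have := hp.two_le
    omega
  exact ⟨fun i => ⟨d i, hdlt i⟩, rfl⟩

end Aux

/-- For a permutation `σ` of `𝔽_p^n` with a single orbit of length `pⁿ`, the image of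
`σ* − id` on `R_n = Maps(𝔽_p^n, 𝔽_p)` is a subspace of dimension `pⁿ − 1` (codimension 1);
if moreover `σ` is strictly triangular, this image equals `R_n⁻`, the span of all monomial
functions `x^α` with `α ≠ (p−1, …, p−1)`. -/
theorem image_of_pullback_sub_id (p n : ℕ) [Fact p.Prime]
    (σ : Equiv.Perm (Fin n → ZMod p))
    (horb : ∀ x y : Fin n → ZMod p, ∃ k : ℕ, (σ ^ k) x = y) :
    (∃ W : Submodule (ZMod p) ((Fin n → ZMod p) → ZMod p),
      (W : Set ((Fin n → ZMod p) → ZMod p)) =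
        {g | ∃ f : (Fin n → ZMod p) → ZMod p, g = (fun x => f (σ x)) - f} ∧
      Module.finrank (ZMod p) W = p ^ n - 1) ∧
    (StrictlyTriangular p n σ →
      {g | ∃ f : (Fin n → ZMod p) → ZMod p, g = (fun x => f (σ x)) - f} =
        (Submodule.span (ZMod p)
          {f : (Fin n → ZMod p) → ZMod p | ∃ α : Fin n → Fin p,
            (¬ ∀ i, (α i : ℕ) = p - 1) ∧ f = fun x => ∏ i, x i ^ ((α i : ℕ))} :
          Set ((Fin n → ZMod p) → ZMod p))) := by
  classical
  have hp : p.Prime := Fact.out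
  let V := (Fin n → ZMod p) → ZMod p
  let T : V →ₗ[ZMod p] V := LinearMap.funLeft (ZMod p) (ZMod p) σ - LinearMap.id
  have hTapp : ∀ f : V, T f = (fun x => f (σ x)) - f := fun f => rfl
  have hset : {g | ∃ f : V, g = (fun x => f (σ x)) - f} = ↑(LinearMap.range T) := by
    ext g
    simp only [Set.mem_setOf_eq, SetLike.mem_coe, LinearMap.mem_range]
    constructor
    · rintro ⟨f, rfl⟩; exact ⟨f, (hTapp f).symm⟩
    · rintro ⟨f, rfl⟩; exact ⟨f, hTapp f⟩
  have hdimV : finrank (ZMod p) V = p ^ n := by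
    rw [Module.finrank_fintype_fun_eq_card, Fintype.card_fun, ZMod.card, Fintype.card_fin]
  have hker : LinearMap.ker T = Submodule.span (ZMod p) {(1 : V)} := by
    apply le_antisymm
    · intro f hf
      have hfix : ∀ x, f (σ x) = f x := by
        intro x
        have h := congrFun (LinearMap.mem_ker.mp hf) x
        rw [hTapp] at h
        have h2 : f (σ x) - f x = 0 := h
        exact sub_eq_zero.mp h2
      have hiter : ∀ k x, f ((σ ^ k) x) = f x := by
        intro k
        induction k with
        | zero => simp
        | succ k ih =>
          intro x
          rw [pow_succ, Equiv.Perm.mul_apply, ih, hfix]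
      rw [Submodule.mem_span_singleton]
      refine ⟨f (fun _ => 0), ?_⟩
      funext y
      obtain ⟨k, hk⟩ := horb (fun _ => 0) y
      rw [← hk, hiter]
      show f (fun _ => 0) * 1 = f (fun _ => 0)
      rw [mul_one]
    · rw [Submodule.span_le, Set.singleton_subset_iff, SetLike.mem_coe, LinearMap.mem_ker,
        hTapp]
      funext x
      show (1 : ZMod p) - 1 = 0
      rw [sub_self]
  have h1ne : (1 : V) ≠ 0 := fun h => one_ne_zero (α := ZMod p) (congrFun h (fun _ => 0))
  have hkerdim : finrank (ZMod p) (LinearMap.ker T) = 1 := by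
    rw [hker]; exact finrank_span_singleton h1ne
  have hrank := LinearMap.finrank_range_add_finrank_ker T
  have hpn : 1 ≤ p ^ n := Nat.one_le_pow _ _ hp.pos
  rw [hkerdim, hdimV] at hrank
  have hrangedim : finrank (ZMod p) (LinearMap.range T) = p ^ n - 1 := by omega
  refine ⟨⟨LinearMap.range T, hset.symm, hrangedim⟩, ?_⟩
  intro _
  set L := sumL p n with hL
  have hLrange : LinearMap.range T ≤ LinearMap.ker L := by
    rintro g ⟨f, rfl⟩
    rw [LinearMap.mem_ker, sumL_apply]
    have : ∀ x, (T f) x = f (σ x) - f x := fun x => by rw [hTapp]; rfl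
    simp only [this]
    rw [Finset.sum_sub_distrib, Equiv.sum_comp σ f, sub_self]
  have hLsurj : Function.Surjective L := by
    intro c
    refine ⟨c • (fun y : Fin n → ZMod p => if y = (fun _ => 0) then (1 : ZMod p) else 0), ?_⟩
    rw [map_smul, sumL_apply]
    rw [Finset.sum_ite_eq' Finset.univ (fun _ => (0 : ZMod p)) (fun _ => (1 : ZMod p))]
    simp
  have hLker : finrank (ZMod p) (LinearMap.ker L) = p ^ n - 1 := by
    have h2 := LinearMap.finrank_range_add_finrank_ker L
    rw [LinearMap.range_eq_top.mpr hLsurj, finrank_top, Module.finrank_self, hdimV] at h2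
    omega
  have hrange_eq : LinearMap.range T = LinearMap.ker L :=
    Submodule.eq_of_le_of_finrank_eq hLrange (by rw [hrangedim, hLker])
  set Sset : Set V := {f : V | ∃ α : Fin n → Fin p,
      (¬ ∀ i, (α i : ℕ) = p - 1) ∧ f = fun x => ∏ i, x i ^ ((α i : ℕ))} with hSset
  have hSle : Submodule.span (ZMod p) Sset ≤ LinearMap.ker L := by
    rw [Submodule.span_le]
    rintro f ⟨α, hα, rfl⟩
    rw [SetLike.mem_coe, LinearMap.mem_ker, sumL_apply, sum_prod_pow]
    push_neg at hα
    obtain ⟨i₀, hi₀⟩ := hα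
    refine Finset.prod_eq_zero (Finset.mem_univ i₀) ?_
    refine FiniteField.sum_pow_lt_card_sub_one _ _ ?_
    have := (α i₀).isLt
    rw [ZMod.card]
    omega
  have hm0 : L (fun x : Fin n → ZMod p => ∏ i, x i ^ (p - 1)) = (-1) ^ n := by
    rw [sumL_apply, sum_prod_pow]
    rw [Finset.prod_congr rfl fun i _ => sum_pow_eq_neg_one p]
    rw [Finset.prod_const, Finset.card_univ, Fintype.card_fin]
  have hkerle : LinearMap.ker L ≤ Submodule.span (ZMod p) Sset := by
    intro f hf
    have hf' : f ∈ Submodule.span (ZMod p) {f : V |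
        ∃ α : Fin n → Fin p, f = fun x => ∏ i, x i ^ (α i : ℕ)} := by
      rw [monomial_span_top]; trivial
    set m₀ : V := fun x => ∏ i, x i ^ (p - 1) with hm₀
    have hsub : Submodule.span (ZMod p) {f : V |
        ∃ α : Fin n → Fin p, f = fun x => ∏ i, x i ^ (α i : ℕ)} ≤
        Submodule.span (ZMod p) Sset ⊔ Submodule.span (ZMod p) {m₀} := by
      rw [Submodule.span_le]
      rintro g ⟨α, rfl⟩
      by_cases hall : ∀ i, (α i : ℕ) = p - 1
      · refine Submodule.mem_sup_right ?_
        have : (fun x : Fin n → ZMod p => ∏ i, x i ^ (α i : ℕ)) = m₀ := by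
          funext x
          exact Finset.prod_congr rfl fun i _ => by rw [hall i]
        rw [this]
        exact Submodule.mem_span_singleton_self m₀
      · exact Submodule.mem_sup_left (Submodule.subset_span ⟨α, hall, rfl⟩)
    obtain ⟨s, hs, t, ht, hst⟩ := Submodule.mem_sup.mp (hsub hf')
    obtain ⟨c, rfl⟩ := Submodule.mem_span_singleton.mp ht
    have hLs : L s = 0 := hSle hs
    have hLf : L f = 0 := hf
    have hc0 : c * (-1 : ZMod p) ^ n = 0 := by
      have := congrArg L hst
      rw [map_add, map_smul, hLs, hm0, hLf, zero_add, smul_eq_mul] at this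
      exact this
    have hc : c = 0 := by
      rcases mul_eq_zero.mp hc0 with h | h
      · exact h
      · exact absurd h (pow_ne_zero _ (neg_ne_zero.mpr one_ne_zero))
    rw [← hst, hc, zero_smul, add_zero]
    exact hs
  have hfin : LinearMap.range T = Submodule.span (ZMod p) Sset := by
    rw [hrange_eq]
    exact le_antisymm hkerle hSle
  rw [hset, hfin]
end

section
/- A strictly triangular permutation σ = (x₁+g₁, …, x_n+g_n) ∈ 𝔹_n(𝔽_p) has a single orbit of length pⁿ if and only if for each 1 ≤ i ≤ n the coefficient of x₁^{p−1}⋯x_{i−1}^{p−1} in gᵢ is nonzero. -/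
open MvPolynomial in
/-- `g` is the reduced polynomial representation of `σ`: `σ = (x₁+g₁, …, x_n+g_n)` with
`gᵢ ∈ 𝔽_p[x₁,…,x_{i-1}]` of degree at most `p − 1` in each variable. -/
def IsReducedRep (p n : ℕ) (σ : Equiv.Perm (Fin n → ZMod p))
    (g : Fin n → MvPolynomial (Fin n) (ZMod p)) : Prop :=
  ∀ i : Fin n,
    (∀ j : Fin n, ¬ j < i → MvPolynomial.degreeOf j (g i) = 0) ∧
    (∀ j : Fin n, MvPolynomial.degreeOf j (g i) ≤ p - 1) ∧
    (∀ x : Fin n → ZMod p, σ x i = x i + MvPolynomial.eval x (g i))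

/-- The exponent vector of the monomial `x₁^{p-1} ⋯ x_{i-1}^{p-1}`. -/
noncomputable def topMonomial (p n : ℕ) (i : Fin n) : Fin n →₀ ℕ :=
  ∑ j ∈ Finset.univ.filter (· < i), Finsupp.single j (p - 1)

namespace MaxOrbitAux

open Finset MvPolynomial

variable {p n : ℕ}

/-- two vectors agree on coordinates below `m` -/
def EqB (m : ℕ) (x y : Fin n → ZMod p) : Prop := ∀ j : Fin n, (j : ℕ) < m → x j = y j

/-- σ can move any point to agree with any target on the first `m` coordinates -/
def TransUpTo (m : ℕ) (σ : Equiv.Perm (Fin n → ZMod p)) : Prop :=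
  ∀ x y : Fin n → ZMod p, ∃ k : ℕ, EqB m ((σ ^ k) x) y

lemma eval_congr {q : MvPolynomial (Fin n) (ZMod p)} {x y : Fin n → ZMod p}
    (h : ∀ j : Fin n, MvPolynomial.degreeOf j q ≠ 0 → x j = y j) :
    eval x q = eval y q := by
  rw [eval_eq', eval_eq']
  refine Finset.sum_congr rfl fun d hd => ?_
  congr 1
  refine Finset.prod_congr rfl fun j _ => ?_
  by_cases hdj : d j = 0
  · rw [hdj, pow_zero, pow_zero]
  · rw [h j fun h0 => hdj (Nat.le_zero.mp (h0 ▸ monomial_le_degreeOf j hd))]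

variable {σ : Equiv.Perm (Fin n → ZMod p)} {g : Fin n → MvPolynomial (Fin n) (ZMod p)}

lemma hg_step (hg : IsReducedRep p n σ g) (x : Fin n → ZMod p) (i : Fin n) :
    σ x i = x i + eval x (g i) := (hg i).2.2 x

lemma eqB_sigma (hg : IsReducedRep p n σ g) {m : ℕ} {x y : Fin n → ZMod p}
    (h : EqB m x y) : EqB m (σ x) (σ y) := by
  intro j hj
  rw [hg_step hg, hg_step hg, h j hj]
  congr 1
  apply eval_congr
  intro j' hdeg
  by_cases hlt : j' < j
  · exact h j' (lt_trans (Fin.lt_def.mp hlt) hj)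
  · exact absurd ((hg j).1 j' hlt) hdeg

lemma eqB_pow (hg : IsReducedRep p n σ g) {m : ℕ} (k : ℕ) {x y : Fin n → ZMod p}
    (h : EqB m x y) : EqB m ((σ ^ k) x) ((σ ^ k) y) := by
  induction k generalizing x y with
  | zero => simpa using h
  | succ k ih =>
    have hx : (σ ^ (k+1)) x = (σ ^ k) (σ x) := by rw [pow_succ]; rfl
    have hy : (σ ^ (k+1)) y = (σ ^ k) (σ y) := by rw [pow_succ]; rfl
    rw [hx, hy]
    exact ih (eqB_sigma hg h)

lemma fixesFirst_pow {τ : Equiv.Perm (Fin n → ZMod p)} {m : ℕ}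
    (h : FixesFirst p n m τ) (a : ℕ) : FixesFirst p n m (τ ^ a) := by
  induction a with
  | zero => intro x j hj; rfl
  | succ a ih =>
    intro x j hj
    have : (τ ^ (a+1)) x = (τ ^ a) (τ x) := by rw [pow_succ]; rfl
    rw [this, ih (τ x) j hj, h x j hj]

lemma pow_triangular (hg : IsReducedRep p n σ g) (K : ℕ) (i : Fin n) {x y : Fin n → ZMod p}
    (h : EqB (i : ℕ) x y) : ((σ ^ K) x) i - x i = ((σ ^ K) y) i - y i := by
  induction K with
  | zero => simp
  | succ K ih =>
    have hx : (σ ^ (K+1)) x = σ ((σ ^ K) x) := by rw [pow_succ']; rfl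
    have hy : (σ ^ (K+1)) y = σ ((σ ^ K) y) := by rw [pow_succ']; rfl
    rw [hx, hy, hg_step hg, hg_step hg]
    have he : eval ((σ ^ K) x) (g i) = eval ((σ ^ K) y) (g i) := by
      apply eval_congr
      intro j hdeg
      have hji : j < i := by by_contra hc; exact hdeg ((hg i).1 j hc)
      exact eqB_pow hg K h j (Fin.lt_def.mp hji)
    rw [he]
    linear_combination ih

lemma pow_apply_eq (hg : IsReducedRep p n σ g) (K : ℕ) (x : Fin n → ZMod p) (i : Fin n) :
    (σ ^ K) x i = x i + ∑ k ∈ Finset.range K, eval ((σ ^ k) x) (g i) := by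
  induction K with
  | zero => simp
  | succ K ih =>
    have hx : (σ ^ (K+1)) x = σ ((σ ^ K) x) := by rw [pow_succ']; rfl
    rw [hx, hg_step hg, ih, Finset.sum_range_succ, add_assoc]

section Prime

variable [Fact p.Prime]

lemma fixes_pow (hg : IsReducedRep p n σ g) (m : ℕ) : FixesFirst p n m (σ ^ (p ^ m)) := by
  induction m with
  | zero => exact fun x i hi => absurd hi (Nat.not_lt_zero _)
  | succ m ih =>
    have hpow : σ ^ (p ^ (m+1)) = (σ ^ (p ^ m)) ^ p := by rw [← pow_mul, pow_succ]
    rw [hpow]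
    intro x i hi
    rcases Nat.lt_succ_iff_lt_or_eq.mp hi with h | h
    · exact fixesFirst_pow ih p x i h
    · set τ := σ ^ (p ^ m) with hτ
      have key : ∀ a : ℕ, (τ ^ a) x i = x i + (a : ZMod p) * (τ x i - x i) := by
        intro a
        induction a with
        | zero => simp
        | succ a ih2 =>
          have hx : (τ ^ (a+1)) x = τ ((τ ^ a) x) := by rw [pow_succ']; rfl
          have heqb : EqB (i : ℕ) ((τ ^ a) x) x := by
            intro j hj
            exact fixesFirst_pow ih a x j (h ▸ hj)
          have hoff : τ ((τ ^ a) x) i - (τ ^ a) x i = τ x i - x i := by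
            rw [hτ]
            exact pow_triangular hg (p ^ m) i heqb
          have : τ ((τ ^ a) x) i = (τ ^ a) x i + (τ x i - x i) := by
            linear_combination hoff
          rw [hx, this, ih2]
          push_cast
          ring
      have := key p
      rwa [ZMod.natCast_self, zero_mul, add_zero] at this

end Prime

/-- The set of vectors supported on coordinates below `m`. -/
def TSet (p n m : ℕ) [NeZero p] : Finset (Fin n → ZMod p) :=
  Fintype.piFinset fun j : Fin n => if (j : ℕ) < m then (Finset.univ : Finset (ZMod p)) else {0}

/-- truncation below `m` -/
def trunc (m : ℕ) (w : Fin n → ZMod p) : Fin n → ZMod p :=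
  fun j => if (j : ℕ) < m then w j else 0

lemma card_filter_lt {m : ℕ} (hm : m ≤ n) :
    ((Finset.univ : Finset (Fin n)).filter fun j : Fin n => (j : ℕ) < m).card = m := by
  have h : (Finset.univ : Finset (Fin m)).card
      = ((Finset.univ : Finset (Fin n)).filter fun j : Fin n => (j : ℕ) < m).card := by
    refine Finset.card_bij (fun (j : Fin m) _ => Fin.castLE hm j) ?_ ?_ ?_
    · intro a _
      simp only [Finset.mem_filter, Finset.mem_univ, true_and]
      exact a.isLt
    · intro a _ b _ hab
      exact Fin.castLE_injective hm hab
    · intro b hb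
      refine ⟨⟨(b : ℕ), (Finset.mem_filter.mp hb).2⟩, Finset.mem_univ _, ?_⟩
      ext
      rfl
  rw [← h, Finset.card_fin]

lemma topMonomial_apply (p : ℕ) (i j : Fin n) :
    topMonomial p n i j = if j < i then p - 1 else 0 := by
  classical
  rw [topMonomial, Finsupp.finset_sum_apply]
  simp only [Finsupp.single_apply]
  rw [Finset.sum_ite_eq' (Finset.univ.filter (· < i)) j fun _ => p - 1]
  simp

section Prime

variable [Fact p.Prime]

lemma sum_pow_le (k : ℕ) (hk : k ≤ p - 1) :
    ∑ x : ZMod p, x ^ k = if k = p - 1 then -1 else 0 := by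
  have hprime : p.Prime := Fact.out
  haveI : NeZero p := ⟨hprime.ne_zero⟩
  split_ifs with h
  · subst h
    calc ∑ x : ZMod p, x ^ (p - 1)
        = ∑ x : ZMod p, if x = 0 then 0 else 1 := by
          refine Finset.sum_congr rfl fun x _ => ?_
          split_ifs with hx
          · subst hx; exact zero_pow (Nat.sub_ne_zero_of_lt hprime.one_lt)
          · exact ZMod.pow_card_sub_one_eq_one hx
      _ = ((Finset.univ.filter fun x : ZMod p => ¬ x = 0).card : ZMod p) := by
          rw [Finset.sum_ite, Finset.sum_const, Finset.sum_const, smul_zero, zero_add,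
            nsmul_eq_mul, mul_one]
      _ = -1 := by
          have hcard : (Finset.univ.filter fun x : ZMod p => ¬ x = 0).card = p - 1 := by
            rw [Finset.filter_not, Finset.card_sdiff_of_subset (Finset.filter_subset _ _)]
            have : (Finset.univ.filter fun x : ZMod p => x = 0) = {0} := by
              ext x; simp
            rw [this, Finset.card_singleton, Finset.card_univ, ZMod.card]
          rw [hcard, Nat.cast_sub hprime.one_le, ZMod.natCast_self, Nat.cast_one, zero_sub]
  · have hlt : k < p - 1 := lt_of_le_of_ne hk h
    have := FiniteField.sum_pow_lt_card_sub_one (ZMod p) k (by rwa [ZMod.card])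
    exact this

lemma card_TSet {m : ℕ} (hm : m ≤ n) : (TSet p n m).card = p ^ m := by
  classical
  haveI : NeZero p := ⟨(Fact.out : p.Prime).ne_zero⟩
  rw [TSet, Fintype.card_piFinset]
  calc (∏ j : Fin n, (if (j : ℕ) < m then (Finset.univ : Finset (ZMod p)) else {0}).card)
      = ∏ j : Fin n, (if (j : ℕ) < m then p else 1) := by
        refine Finset.prod_congr rfl fun j _ => ?_
        split_ifs
        · rw [Finset.card_univ, ZMod.card]
        · rw [Finset.card_singleton]
    _ = p ^ m := by
        rw [Finset.prod_ite, Finset.prod_const, Finset.prod_const, one_pow, mul_one,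
          card_filter_lt hm]

lemma sum_TSet_eval {m : ℕ} (hm : m ≤ n) (i : Fin n) (him : (i : ℕ) = m)
    {q : MvPolynomial (Fin n) (ZMod p)}
    (h0 : ∀ j : Fin n, ¬ j < i → MvPolynomial.degreeOf j q = 0)
    (hdeg : ∀ j : Fin n, MvPolynomial.degreeOf j q ≤ p - 1) :
    ∑ z ∈ TSet p n m, eval z q = (-1) ^ m * coeff (topMonomial p n i) q := by
  classical
  have hsupp0 : ∀ d ∈ q.support, ∀ j : Fin n, ¬ j < i → d j = 0 := fun d hd j hj =>
    Nat.le_zero.mp (h0 j hj ▸ monomial_le_degreeOf j hd)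
  have hsupple : ∀ d ∈ q.support, ∀ j : Fin n, d j ≤ p - 1 := fun d hd j =>
    le_trans (monomial_le_degreeOf j hd) (hdeg j)
  have hinner : ∀ d ∈ q.support, (∑ z ∈ TSet p n m, ∏ j : Fin n, z j ^ d j)
      = if d = topMonomial p n i then (-1 : ZMod p) ^ m else 0 := by
    intro d hd
    have hfac : ∀ j : Fin n,
        (∑ x ∈ (if (j : ℕ) < m then (Finset.univ : Finset (ZMod p)) else {0}), x ^ d j)
        = if (j : ℕ) < m then (if d j = p - 1 then -1 else 0) else 1 := by
      intro j
      by_cases hj : (j : ℕ) < m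
      · rw [if_pos hj, if_pos hj]
        exact sum_pow_le (d j) (hsupple d hd j)
      · rw [if_neg hj, if_neg hj, Finset.sum_singleton,
          hsupp0 d hd j fun hji => hj (him ▸ Fin.lt_def.mp hji), pow_zero]
    have hTS : (∑ z ∈ TSet p n m, ∏ j : Fin n, z j ^ d j)
        = ∏ j : Fin n, ∑ x ∈ (if (j : ℕ) < m then (Finset.univ : Finset (ZMod p)) else {0}),
            x ^ d j := by
      rw [TSet, Finset.prod_univ_sum]
    rw [hTS, Finset.prod_congr rfl fun j _ => hfac j]
    by_cases hdt : d = topMonomial p n i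
    · rw [if_pos hdt]
      have hone : ∀ j : Fin n,
          (if (j : ℕ) < m then (if d j = p - 1 then (-1 : ZMod p) else 0) else 1)
          = if (j : ℕ) < m then -1 else 1 := by
        intro j
        by_cases hj : (j : ℕ) < m
        · rw [if_pos hj, if_pos hj, if_pos]
          rw [hdt, topMonomial_apply, if_pos (Fin.lt_def.mpr (him ▸ hj))]
        · rw [if_neg hj, if_neg hj]
      rw [Finset.prod_congr rfl fun j _ => hone j, Finset.prod_ite, Finset.prod_const,
        Finset.prod_const, one_pow, mul_one, card_filter_lt hm]
    · rw [if_neg hdt]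
      have hex : ∃ j : Fin n, (j : ℕ) < m ∧ d j ≠ p - 1 := by
        by_contra hcon
        push_neg at hcon
        apply hdt
        ext j
        rw [topMonomial_apply]
        by_cases hji : j < i
        · rw [if_pos hji]
          exact hcon j (him ▸ Fin.lt_def.mp hji)
        · rw [if_neg hji]
          exact hsupp0 d hd j hji
      obtain ⟨j, hj1, hj2⟩ := hex
      exact Finset.prod_eq_zero (Finset.mem_univ j) (by rw [if_pos hj1, if_neg hj2])
  calc ∑ z ∈ TSet p n m, eval z q
      = ∑ z ∈ TSet p n m, ∑ d ∈ q.support, coeff d q * ∏ j : Fin n, z j ^ d j :=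
        Finset.sum_congr rfl fun z _ => eval_eq' z q
    _ = ∑ d ∈ q.support, ∑ z ∈ TSet p n m, coeff d q * ∏ j : Fin n, z j ^ d j :=
        Finset.sum_comm
    _ = ∑ d ∈ q.support, coeff d q * ∑ z ∈ TSet p n m, ∏ j : Fin n, z j ^ d j :=
        Finset.sum_congr rfl fun d _ => (Finset.mul_sum _ _ _).symm
    _ = ∑ d ∈ q.support, (if d = topMonomial p n i then coeff d q * (-1) ^ m else 0) := by
        refine Finset.sum_congr rfl fun d hd => ?_
        rw [hinner d hd]
        split_ifs
        · rfl
        · rw [mul_zero]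
    _ = if topMonomial p n i ∈ q.support then coeff (topMonomial p n i) q * (-1) ^ m else 0 :=
        Finset.sum_ite_eq' _ _ _
    _ = (-1) ^ m * coeff (topMonomial p n i) q := by
        split_ifs with h
        · ring
        · rw [MvPolynomial.notMem_support_iff.mp h, mul_zero]

end Prime

section Main

variable [Fact p.Prime]

lemma exists_small (hg : IsReducedRep p n σ g) {M m : ℕ}
    (hfix : FixesFirst p n m (σ ^ M)) (hM : 0 < M) (x z : Fin n → ZMod p)
    (h : ∃ k : ℕ, EqB m ((σ ^ k) x) z) : ∃ k < M, EqB m ((σ ^ k) x) z := by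
  obtain ⟨k', hk'⟩ := h
  refine ⟨k' % M, Nat.mod_lt _ hM, ?_⟩
  intro j hj
  have hdc : (σ ^ k') x j = (σ ^ (k' % M)) x j := by
    conv_lhs => rw [← Nat.div_add_mod k' M]
    rw [pow_add, Equiv.Perm.mul_apply, pow_mul]
    exact fixesFirst_pow hfix (k' / M) ((σ ^ (k' % M)) x) j hj
  rw [← hdc]
  exact hk' j hj

lemma orbit_sum (hg : IsReducedRep p n σ g) {m : ℕ} (hm : m ≤ n)
    (htr : TransUpTo m σ) (x : Fin n → ZMod p)
    (f : (Fin n → ZMod p) → ZMod p) (hf : ∀ w w', EqB m w w' → f w = f w') :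
    ∑ k ∈ Finset.range (p ^ m), f ((σ ^ k) x) = ∑ z ∈ TSet p n m, f z := by
  classical
  have hppos : 0 < p ^ m := pow_pos (Fact.out : p.Prime).pos m
  set φ : ℕ → (Fin n → ZMod p) := fun k => trunc m ((σ ^ k) x) with hφ
  have heqb : ∀ k, EqB m ((σ ^ k) x) (φ k) := by
    intro k j hj
    simp [hφ, trunc, hj]
  have hmem : ∀ k, φ k ∈ TSet p n m := by
    intro k
    rw [TSet, Fintype.mem_piFinset]
    intro j
    by_cases hj : (j : ℕ) < m
    · rw [if_pos hj]; exact Finset.mem_univ _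
    · rw [if_neg hj]; simp [hφ, trunc, hj]
  have hsurj : ∀ z ∈ TSet p n m, ∃ k ∈ Finset.range (p ^ m), φ k = z := by
    intro z hz
    obtain ⟨k, hk1, hk2⟩ := exists_small hg (fixes_pow hg m) hppos x z (htr x z)
    refine ⟨k, Finset.mem_range.mpr hk1, ?_⟩
    funext j
    by_cases hj : (j : ℕ) < m
    · simpa [hφ, trunc, hj] using hk2 j hj
    · have hzj : z j = 0 := by
        have := (Fintype.mem_piFinset.mp hz) j
        rw [if_neg hj] at this
        simpa using this
      simp [hφ, trunc, hj, hzj]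
  have himg : (Finset.range (p ^ m)).image φ = TSet p n m := by
    apply Finset.Subset.antisymm
    · intro z hz
      obtain ⟨k, _, rfl⟩ := Finset.mem_image.mp hz
      exact hmem k
    · intro z hz
      obtain ⟨k, hk, hkz⟩ := hsurj z hz
      exact Finset.mem_image.mpr ⟨k, hk, hkz⟩
  have hcard : ((Finset.range (p ^ m)).image φ).card = (Finset.range (p ^ m)).card := by
    rw [himg, card_TSet hm, Finset.card_range]
  have hinj := Finset.card_image_iff.mp hcard
  rw [← himg, Finset.sum_image fun a ha b hb hab => hinj ha hb hab]
  exact Finset.sum_congr rfl fun k _ => hf _ _ (heqb k)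

lemma sigma_pow_pm_apply (hg : IsReducedRep p n σ g) {m : ℕ} (hmn : m < n)
    (htr : TransUpTo m σ) (x : Fin n → ZMod p) :
    (σ ^ (p ^ m)) x ⟨m, hmn⟩
      = x ⟨m, hmn⟩ + (-1) ^ m * coeff (topMonomial p n ⟨m, hmn⟩) (g ⟨m, hmn⟩) := by
  set i : Fin n := ⟨m, hmn⟩ with hi
  rw [pow_apply_eq hg]
  congr 1
  have hf : ∀ w w', EqB m w w' → eval w (g i) = eval w' (g i) := by
    intro w w' h
    apply eval_congr
    intro j hdeg
    have hji : j < i := by by_contra hc; exact hdeg ((hg i).1 j hc)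
    exact h j (Fin.lt_def.mp hji)
  rw [orbit_sum hg (le_of_lt hmn) htr x _ hf]
  exact sum_TSet_eval (le_of_lt hmn) i rfl (hg i).1 (hg i).2.1

lemma tau_iter (hg : IsReducedRep p n σ g) {m : ℕ} (hmn : m < n)
    (htr : TransUpTo m σ) (j : ℕ) (w : Fin n → ZMod p) :
    ((σ ^ (p ^ m)) ^ j) w ⟨m, hmn⟩
      = w ⟨m, hmn⟩
        + (j : ZMod p) * ((-1) ^ m * coeff (topMonomial p n ⟨m, hmn⟩) (g ⟨m, hmn⟩)) := by
  induction j with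
  | zero => simp
  | succ j ih =>
    have hx : ((σ ^ (p ^ m)) ^ (j+1)) w = (σ ^ (p ^ m)) (((σ ^ (p ^ m)) ^ j) w) := by
      rw [pow_succ']; rfl
    rw [hx, sigma_pow_pm_apply hg hmn htr, ih]
    push_cast
    ring

lemma not_trans_of_fixes {m : ℕ} (hmn : m < n)
    (hfix : FixesFirst p n (m+1) (σ ^ (p ^ m))) (hg : IsReducedRep p n σ g) :
    ¬ TransUpTo (m+1) σ := by
  intro htr
  classical
  have hppos : 0 < p ^ m := pow_pos (Fact.out : p.Prime).pos m
  set φ : ℕ → (Fin n → ZMod p) := fun k => trunc (m+1) ((σ ^ k) (0 : Fin n → ZMod p)) with hφ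
  have hsurj : Set.SurjOn φ (Finset.range (p ^ m) : Finset ℕ) (TSet p n (m+1) : Finset _) := by
    intro z hz
    obtain ⟨k, hk1, hk2⟩ :=
      exists_small hg hfix hppos (0 : Fin n → ZMod p) z (htr (0 : Fin n → ZMod p) z)
    refine ⟨k, Finset.mem_coe.mpr (Finset.mem_range.mpr hk1), ?_⟩
    funext j
    by_cases hj : (j : ℕ) < m + 1
    · simpa [hφ, trunc, hj] using hk2 j hj
    · have hzj : z j = 0 := by
        have := (Fintype.mem_piFinset.mp (Finset.mem_coe.mp hz)) j
        rw [if_neg hj] at this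
        simpa using this
      simp [hφ, trunc, hj, hzj]
  have hle := Finset.card_le_card_of_surjOn φ hsurj
  rw [card_TSet (Nat.succ_le_of_lt hmn), Finset.card_range] at hle
  exact absurd hle (not_le.mpr (Nat.pow_lt_pow_succ (Fact.out : p.Prime).one_lt))

lemma trans_iff (hg : IsReducedRep p n σ g) (m : ℕ) :
    TransUpTo m σ ↔ ∀ i : Fin n, (i : ℕ) < m → coeff (topMonomial p n i) (g i) ≠ 0 := by
  induction m with
  | zero =>
    constructor
    · intro _ i hi
      exact absurd hi (Nat.not_lt_zero _)
    · intro _ x y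
      exact ⟨0, fun j hj => absurd hj (Nat.not_lt_zero _)⟩
  | succ m ih =>
    by_cases hmn : m < n
    · constructor
      · intro htr
        have htrm : TransUpTo m σ := fun x y =>
          (htr x y).imp fun k hk j hj => hk j (Nat.lt_succ_of_lt hj)
        have hcoef := ih.mp htrm
        intro i hi
        rcases Nat.lt_succ_iff_lt_or_eq.mp hi with h | h
        · exact hcoef i h
        · have hieq : i = ⟨m, hmn⟩ := Fin.ext h
          subst hieq
          intro hc
          have hfix : FixesFirst p n (m+1) (σ ^ (p ^ m)) := by
            intro x j hj
            rcases Nat.lt_succ_iff_lt_or_eq.mp hj with h' | h'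
            · exact fixes_pow hg m x j h'
            · have hjeq : j = ⟨m, hmn⟩ := Fin.ext h'
              subst hjeq
              rw [sigma_pow_pm_apply hg hmn htrm, hc, mul_zero, add_zero]
          exact not_trans_of_fixes hmn hfix hg htr
      · intro hcoef
        have htrm : TransUpTo m σ := ih.mpr fun i hi => hcoef i (Nat.lt_succ_of_lt hi)
        set i₀ : Fin n := ⟨m, hmn⟩ with hi₀
        set s : ZMod p := (-1) ^ m * coeff (topMonomial p n i₀) (g i₀) with hs
        have hsne : s ≠ 0 :=
          mul_ne_zero (pow_ne_zero _ (neg_ne_zero.mpr one_ne_zero))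
            (hcoef i₀ (Nat.lt_succ_of_le (le_of_eq rfl)))
        intro x y
        obtain ⟨k₀, hk₀⟩ := htrm x y
        set w := (σ ^ k₀) x with hw
        set a : ZMod p := (y i₀ - w i₀) * s⁻¹ with ha
        refine ⟨p ^ m * a.val + k₀, ?_⟩
        have hdecomp : (σ ^ (p ^ m * a.val + k₀)) x = ((σ ^ (p ^ m)) ^ a.val) w := by
          rw [pow_add, pow_mul, Equiv.Perm.mul_apply, hw]
        intro j hj
        rcases Nat.lt_succ_iff_lt_or_eq.mp hj with h' | h'
        · rw [hdecomp, fixesFirst_pow (fixes_pow hg m) a.val w j h']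
          exact hk₀ j h'
        · have hjeq : j = i₀ := Fin.ext h'
          subst hjeq
          rw [hdecomp, tau_iter hg hmn htrm, ← hs, ZMod.natCast_rightInverse a, ha,
            mul_assoc, inv_mul_cancel₀ hsne, mul_one]
          ring
    · push_neg at hmn
      have h1 : ∀ x y : Fin n → ZMod p, EqB (m+1) x y ↔ EqB m x y := by
        intro x y
        constructor
        · intro h j hj
          exact h j (Nat.lt_succ_of_lt hj)
        · intro h j _
          exact h j (lt_of_lt_of_le j.isLt hmn)
      constructor
      · intro htr i hi
        exact (ih.mp fun x y => (htr x y).imp fun k hk => (h1 _ _).mp hk) i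
          (lt_of_lt_of_le i.isLt hmn)
      · intro hcoef x y
        obtain ⟨k, hk⟩ := (ih.mpr fun i hi => hcoef i (Nat.lt_succ_of_lt hi)) x y
        exact ⟨k, (h1 _ _).mpr hk⟩

end Main

end MaxOrbitAux

/-- A strictly triangular permutation `σ = (x₁+g₁, …, x_n+g_n) ∈ 𝔹_n(𝔽_p)` has a single
orbit of length `pⁿ` if and only if for each `i` the coefficient of
`x₁^{p−1} ⋯ x_{i−1}^{p−1}` in `gᵢ` is nonzero. -/
theorem maximal_orbit_iff_top_coeffs_ne_zero (p n : ℕ) [Fact p.Prime]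
    (σ : Equiv.Perm (Fin n → ZMod p)) (g : Fin n → MvPolynomial (Fin n) (ZMod p))
    (hg : IsReducedRep p n σ g) :
    (∀ x y : Fin n → ZMod p, ∃ k : ℕ, (σ ^ k) x = y) ↔
    (∀ i : Fin n, MvPolynomial.coeff (topMonomial p n i) (g i) ≠ 0) := by
  have htr := MaxOrbitAux.trans_iff hg n
  constructor
  · intro h i
    refine (htr.mp fun x y => ?_) i i.isLt
    obtain ⟨k, hk⟩ := h x y
    exact ⟨k, fun j _ => by rw [hk]⟩
  · intro h x y
    obtain ⟨k, hk⟩ := htr.mpr (fun i _ => h i) x y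
    exact ⟨k, funext fun j => hk j j.isLt⟩
end

section
/- If σ ∈ 𝔹_n(𝔽_p) has a single orbit of length pⁿ and c_n is the coefficient of (x₁⋯x_{n−1})^{p−1} in g_n, then σ^{p^{n−1}}(α̃, a) = (α̃, a + (−1)^{n−1} c_n) for all α̃ ∈ 𝔽_p^{n−1}, a ∈ 𝔽_p. -/
open Finset MvPolynomial

/-- Sum of `t^d` over `ZMod p`. -/
lemma aux_sum_pow (p : ℕ) [Fact p.Prime] (d : ℕ) (hd : d ≤ p - 1) :
    (∑ t : ZMod p, t ^ d) = if d = p - 1 then -1 else 0 := by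
  have hp2 : 2 ≤ p := (Fact.out : p.Prime).two_le
  by_cases h : d = p - 1
  · subst h
    simp only [if_pos rfl]
    have h1 : ∀ t : ZMod p, t ^ (p - 1) = (1 : ZMod p) - (if t = 0 then 1 else 0) := by
      intro t
      rw [ZMod.pow_card_sub_one t]
      by_cases ht : t = 0 <;> simp [ht]
    rw [Finset.sum_congr rfl fun t _ => h1 t, Finset.sum_sub_distrib]
    rw [Finset.sum_ite_eq' Finset.univ (0 : ZMod p) (fun _ => (1 : ZMod p))]
    simp [ZMod.card, ZMod.natCast_self]
  · rw [if_neg h]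
    have hq : Fintype.card (ZMod p) = p := ZMod.card p
    have : d < Fintype.card (ZMod p) - 1 := by omega
    exact FiniteField.sum_pow_lt_card_sub_one (ZMod p) d this

section Cyc

variable {α : Type*} [Fintype α] (f : α → α)

lemma cyc_no_small_period (htr : ∀ a b : α, ∃ k : ℕ, f^[k] a = b) {d : ℕ} (hd : 0 < d)
    (hdc : d < Fintype.card α) {a : α} (h : f^[d] a = a) : False := by
  have hfix : ∀ b, f^[d] b = b := by
    intro b
    obtain ⟨k, hk⟩ := htr a b
    rw [← hk, ← Function.iterate_add_apply, Nat.add_comm, Function.iterate_add_apply, h]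
  have hq : ∀ q b, f^[d * q] b = b := by
    intro q
    induction q with
    | zero => simp
    | succ q ih =>
      intro b
      rw [Nat.mul_succ, Function.iterate_add_apply, hfix, ih]
  have horb : ∀ b, ∃ r : Fin d, f^[(r : ℕ)] a = b := by
    intro b
    obtain ⟨k, hk⟩ := htr a b
    refine ⟨⟨k % d, Nat.mod_lt _ hd⟩, ?_⟩
    have : f^[k] a = f^[k % d] a := by
      conv_lhs => rw [← Nat.div_add_mod k d, Nat.add_comm, Function.iterate_add_apply, hq]
    rw [← this, hk]
  have := Fintype.card_le_of_surjective _ (fun b => horb b)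
  rw [Fintype.card_fin] at this
  omega

lemma cyc_inj (htr : ∀ a b : α, ∃ k : ℕ, f^[k] a = b) (a : α) :
    Function.Injective (fun k : Fin (Fintype.card α) => f^[(k : ℕ)] a) := by
  have key : ∀ i j : ℕ, i < j → j < Fintype.card α → f^[i] a = f^[j] a → False := by
    intro i j hij hj h
    refine cyc_no_small_period f htr (d := j - i) (by omega) (by omega) (a := f^[i] a) ?_
    rw [← Function.iterate_add_apply, Nat.sub_add_cancel hij.le, ← h]
  intro i j hij
  simp only at hij
  rcases Nat.lt_trichotomy (i : ℕ) (j : ℕ) with h | h | h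
  · exact absurd hij (fun hh => key i j h j.2 hh)
  · exact Fin.ext h
  · exact absurd hij.symm (fun hh => key j i h i.2 hh)

lemma cyc_bij (htr : ∀ a b : α, ∃ k : ℕ, f^[k] a = b) (a : α) :
    Function.Bijective (fun k : Fin (Fintype.card α) => f^[(k : ℕ)] a) :=
  (Fintype.bijective_iff_injective_and_card _).mpr ⟨cyc_inj f htr a, by simp⟩

lemma cyc_iterate_card (htr : ∀ a b : α, ∃ k : ℕ, f^[k] a = b) (a : α) :
    f^[Fintype.card α] a = a := by
  obtain ⟨k, hk⟩ := (cyc_bij f htr a).surjective (f^[Fintype.card α] a)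
  simp only at hk
  rcases Nat.eq_zero_or_pos (k : ℕ) with h | h
  · rw [← hk, h, Function.iterate_zero_apply]
  · exfalso
    refine cyc_no_small_period f htr (d := Fintype.card α - (k : ℕ)) (by omega)
      (by have := k.2; omega) (a := f^[(k : ℕ)] a) ?_
    rw [← Function.iterate_add_apply, Nat.sub_add_cancel k.2.le, hk]

end Cyc

/-- eval only depends on variables with nonzero degree. -/
lemma aux_eval_congr {n p : ℕ} {q : MvPolynomial (Fin n) (ZMod p)} {x y : Fin n → ZMod p}
    (h : ∀ j, MvPolynomial.degreeOf j q ≠ 0 → x j = y j) :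
    MvPolynomial.eval x q = MvPolynomial.eval y q := by
  rw [eval_eq', eval_eq']
  refine Finset.sum_congr rfl fun d hd => ?_
  congr 1
  refine Finset.prod_congr rfl fun j _ => ?_
  by_cases hj : MvPolynomial.degreeOf j q = 0
  · have : d j = 0 := by
      have := (MvPolynomial.degreeOf_lt_iff (n := j) (f := q) one_pos).mp (by omega) d hd
      omega
    rw [this, pow_zero, pow_zero]
  · rw [h j hj]

/-- The parametrization of the hyperplane `v L = 0` by the remaining coordinates. -/
def auxE (p n : ℕ) (L : Fin n) [DecidableEq (Fin n)] :
    ({j : Fin n // j ≠ L} → ZMod p) ≃ {v : Fin n → ZMod p // v L = 0} where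
  toFun := fun y => ⟨fun j => if h : j = L then 0 else y ⟨j, h⟩, by simp⟩
  invFun := fun v t => v.1 t.1
  left_inv := by intro y; funext t; simp [t.2]
  right_inv := by
    intro v; apply Subtype.ext; funext j
    by_cases h : j = L
    · simp only [dif_pos h]; rw [h, v.2]
    · simp only [dif_neg h]

lemma aux_card_ne (n : ℕ) (L : Fin n) :
    Fintype.card {j : Fin n // j ≠ L} = n - 1 := by
  have := Fintype.card_subtype_compl (fun j : Fin n => j = L)
  rw [Fintype.card_subtype_eq, Fintype.card_fin] at this
  exact this

lemma aux_card_hyperplane (p n : ℕ) [Fact p.Prime] (L : Fin n) :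
    Fintype.card {v : Fin n → ZMod p // v L = 0} = p ^ (n - 1) := by
  classical
  rw [← Fintype.card_congr (auxE p n L), Fintype.card_fun, ZMod.card, aux_card_ne]

lemma aux_top_apply (p n : ℕ) (i j : Fin n) :
    topMonomial p n i j = if j < i then p - 1 else 0 := by
  classical
  rw [topMonomial, Finset.sum_apply']
  rw [Finset.sum_congr rfl fun k _ => Finsupp.single_apply (a := k) (b := p - 1) (a' := j)]
  rw [Finset.sum_ite_eq']
  simp

lemma aux_hyperplane_sum (p n : ℕ) [Fact p.Prime] (L : Fin n)
    (hLmax : ∀ j : Fin n, j ≠ L → j < L)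
    (q : MvPolynomial (Fin n) (ZMod p))
    (h0 : MvPolynomial.degreeOf L q = 0)
    (hle : ∀ j, MvPolynomial.degreeOf j q ≤ p - 1) :
    ∑ v : {v : Fin n → ZMod p // v L = 0}, MvPolynomial.eval v.1 q =
      (-1 : ZMod p) ^ (n - 1) * MvPolynomial.coeff (topMonomial p n L) q := by
  classical
  have hcard : Fintype.card {j : Fin n // j ≠ L} = n - 1 := aux_card_ne n L
  set T := topMonomial p n L with hT
  set E := auxE p n L with hE
  rw [← E.sum_comp (fun v => MvPolynomial.eval v.1 q)]
  have hev : ∀ y : ({j : Fin n // j ≠ L} → ZMod p),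
      MvPolynomial.eval (E y).1 q =
        ∑ d ∈ q.support, q.coeff d * ∏ t : {j : Fin n // j ≠ L}, y t ^ d t.1 := by
    intro y
    rw [eval_eq']
    refine Finset.sum_congr rfl fun d hd => ?_
    congr 1
    have hdL : d L = 0 := by
      have := (MvPolynomial.degreeOf_lt_iff (n := L) (f := q) one_pos).mp (by omega) d hd
      omega
    calc ∏ j : Fin n, (E y).1 j ^ d j
        = (∏ j ∈ Finset.univ.erase L, (E y).1 j ^ d j) * (E y).1 L ^ d L :=
          (Finset.prod_erase_mul _ _ (Finset.mem_univ L)).symm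
      _ = ∏ j ∈ Finset.univ.erase L, (E y).1 j ^ d j := by rw [hdL, pow_zero, mul_one]
      _ = ∏ t : {j : Fin n // j ≠ L}, (E y).1 t.1 ^ d t.1 := by
          rw [Finset.prod_subtype (p := fun j => j ≠ L) (Finset.univ.erase L)
            (fun j => by simp [Finset.mem_erase]) (fun j => (E y).1 j ^ d j)]
      _ = ∏ t : {j : Fin n // j ≠ L}, y t ^ d t.1 := by
          refine Finset.prod_congr rfl fun t _ => ?_
          show (if h : (t : Fin n) = L then (0 : ZMod p) else y ⟨t.1, h⟩) ^ d t.1 = y t ^ d t.1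
          rw [dif_neg t.2]
  rw [Finset.sum_congr rfl fun y _ => hev y, Finset.sum_comm]
  have hinner : ∀ d ∈ q.support,
      (∑ y : ({j : Fin n // j ≠ L} → ZMod p), q.coeff d * ∏ t, y t ^ d t.1) =
        q.coeff d * (if d = T then (-1 : ZMod p) ^ (n - 1) else 0) := by
    intro d hd
    rw [← Finset.mul_sum]
    congr 1
    rw [← Fintype.prod_sum (fun (t : {j : Fin n // j ≠ L}) (c : ZMod p) => c ^ d t.1)]
    have hdle : ∀ j, d j ≤ p - 1 := fun j =>
      MvPolynomial.degreeOf_le_iff.mp (hle j) d hd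
    have hdL : d L = 0 := by
      have := (MvPolynomial.degreeOf_lt_iff (n := L) (f := q) one_pos).mp (by omega) d hd
      omega
    by_cases hdT : d = T
    · rw [if_pos hdT]
      have hfac : ∀ t : {j : Fin n // j ≠ L}, (∑ c : ZMod p, c ^ d t.1) = -1 := by
        intro t
        have ht : d t.1 = p - 1 := by
          rw [hdT, hT, aux_top_apply, if_pos (hLmax t.1 t.2)]
        rw [ht, aux_sum_pow p _ le_rfl, if_pos rfl]
      rw [Finset.prod_congr rfl fun t _ => hfac t, Finset.prod_const]
      rw [Finset.card_univ, hcard]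
    · rw [if_neg hdT]
      obtain ⟨j, hj⟩ : ∃ j, d j ≠ T j := by
        by_contra hc
        push_neg at hc
        exact hdT (Finsupp.ext hc)
      have hjL : j ≠ L := by
        intro h; subst h
        exact hj (by rw [hdL, hT, aux_top_apply, if_neg (lt_irrefl _)])
      refine Finset.prod_eq_zero (Finset.mem_univ (⟨j, hjL⟩ : {j : Fin n // j ≠ L})) ?_
      have : d j ≠ p - 1 := by
        intro h; exact hj (by rw [h, hT, aux_top_apply, if_pos (hLmax j hjL)])
      rw [aux_sum_pow p _ (hdle j), if_neg this]
  rw [Finset.sum_congr rfl hinner]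
  rw [Finset.sum_congr rfl fun d _ => (mul_ite _ _ _ _).trans (by rw [mul_zero])]
  rw [Finset.sum_ite_eq' q.support T (fun d => q.coeff d * (-1 : ZMod p) ^ (n - 1))]
  by_cases hTs : T ∈ q.support
  · rw [if_pos hTs]; ring
  · rw [if_neg hTs, MvPolynomial.notMem_support_iff.mp hTs, mul_zero]

/-- If `σ = (x₁+g₁, …, x_n+g_n) ∈ 𝔹_n(𝔽_p)` has a single orbit of length `pⁿ` and `c_n` is
the coefficient of `(x₁ ⋯ x_{n−1})^{p−1}` in `g_n`, then
`σ^{p^{n−1}}(α̃, a) = (α̃, a + (−1)^{n−1} c_n)` for all `α̃ ∈ 𝔽_p^{n−1}`, `a ∈ 𝔽_p`. -/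
theorem pow_p_pow_pred_translates_last (p n : ℕ) [Fact p.Prime] (hn : 0 < n)
    (σ : Equiv.Perm (Fin n → ZMod p)) (g : Fin n → MvPolynomial (Fin n) (ZMod p))
    (hg : IsReducedRep p n σ g)
    (horb : ∀ x y : Fin n → ZMod p, ∃ k : ℕ, (σ ^ k) x = y) :
    ∀ x : Fin n → ZMod p,
      (σ ^ (p ^ (n - 1))) x =
        Function.update x ⟨n - 1, by omega⟩
          (x ⟨n - 1, by omega⟩ +
            (-1 : ZMod p) ^ (n - 1) *
              MvPolynomial.coeff (topMonomial p n ⟨n - 1, by omega⟩) (g ⟨n - 1, by omega⟩)) := by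
  classical
  intro x
  have hn1 : n - 1 < n := by omega
  set L : Fin n := ⟨n - 1, hn1⟩ with hLdef
  show (σ ^ (p ^ (n - 1))) x =
    Function.update x L
      (x L + (-1 : ZMod p) ^ (n - 1) * MvPolynomial.coeff (topMonomial p n L) (g L))
  have hcomp : ∀ (i : Fin n) (z : Fin n → ZMod p),
      σ z i = z i + MvPolynomial.eval z (g i) := fun i z => (hg i).2.2 z
  have hLmax : ∀ j : Fin n, j ≠ L → j < L := by
    intro j hj
    have h2 := j.2
    have h3 : (j : ℕ) ≠ n - 1 := fun h => hj (Fin.ext h)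
    rw [Fin.lt_def]
    show (j : ℕ) < n - 1
    omega
  have h0 : MvPolynomial.degreeOf L (g L) = 0 := (hg L).1 L (lt_irrefl L)
  have hdep : ∀ (z w : Fin n → ZMod p) (j : Fin n), (∀ i, i < j → z i = w i) →
      MvPolynomial.eval z (g j) = MvPolynomial.eval w (g j) := by
    intro z w j h
    apply aux_eval_congr
    intro i hi
    by_cases hij : i < j
    · exact h i hij
    · exact absurd ((hg j).1 i hij) hi
  -- the induced map on the hyperplane `v L = 0`
  set π : (Fin n → ZMod p) → {v : Fin n → ZMod p // v L = 0} :=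
    fun z => ⟨Function.update z L 0, by simp⟩ with hπdef
  set f : {v : Fin n → ZMod p // v L = 0} → {v : Fin n → ZMod p // v L = 0} :=
    fun v => π (σ v.1) with hfdef
  have hπ1 : ∀ z (j : Fin n), j ≠ L → (π z).1 j = z j := by
    intro z j hj
    exact Function.update_of_ne hj _ _
  have hπ2 : ∀ z, (π z).1 L = 0 := by intro z; simp [hπdef]
  have hσdep : ∀ z (j : Fin n), j ≠ L → σ ((π z).1) j = σ z j := by
    intro z j hj
    rw [hcomp j, hcomp j, hπ1 z j hj]
    congr 1
    apply hdep
    intro i hi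
    have hiL : i ≠ L := ne_of_lt (lt_trans hi (hLmax j hj))
    exact hπ1 z i hiL
  have hfπ : ∀ z, f (π z) = π (σ z) := by
    intro z
    apply Subtype.ext; funext j
    show (π (σ (π z).1)).1 j = (π (σ z)).1 j
    by_cases hj : j = L
    · subst hj
      rw [hπ2, hπ2]
    · rw [hπ1 _ j hj, hπ1 _ j hj, hσdep z j hj]
  have hfk : ∀ z k, f^[k] (π z) = π ((σ ^ k) z) := by
    intro z k
    induction k with
    | zero => simp
    | succ k ih =>
      rw [Function.iterate_succ_apply', ih, hfπ]
      congr 1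
      rw [pow_succ', Equiv.Perm.mul_apply]
  have hπid : ∀ v : {v : Fin n → ZMod p // v L = 0}, π v.1 = v := by
    intro v
    apply Subtype.ext; funext j
    by_cases hj : j = L
    · subst hj; rw [hπ2, v.2]
    · rw [hπ1 _ j hj]
  have htr : ∀ a b : {v : Fin n → ZMod p // v L = 0}, ∃ k, f^[k] a = b := by
    intro a b
    obtain ⟨k, hk⟩ := horb a.1 b.1
    exact ⟨k, by rw [← hπid a, hfk, hk, hπid]⟩
  have hcard : Fintype.card {v : Fin n → ZMod p // v L = 0} = p ^ (n - 1) :=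
    aux_card_hyperplane p n L
  -- the last coordinate accumulates the sum of `g L` along the orbit
  have hlast : ∀ k, (σ ^ k) x L =
      x L + ∑ i ∈ Finset.range k, MvPolynomial.eval ((σ ^ i) x) (g L) := by
    intro k
    induction k with
    | zero => simp
    | succ k ih =>
      rw [pow_succ', Equiv.Perm.mul_apply, hcomp L, ih, Finset.sum_range_succ]
      rw [add_assoc]
  have hsum : ∑ i ∈ Finset.range (p ^ (n - 1)), MvPolynomial.eval ((σ ^ i) x) (g L) =
      ∑ v : {v : Fin n → ZMod p // v L = 0}, MvPolynomial.eval v.1 (g L) := by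
    have h1 : ∀ i : ℕ, MvPolynomial.eval ((σ ^ i) x) (g L) =
        MvPolynomial.eval ((f^[i] (π x)).1) (g L) := by
      intro i
      rw [hfk]
      apply aux_eval_congr
      intro j hj
      have hjL : j ≠ L := by intro h; subst h; exact hj h0
      exact (hπ1 _ j hjL).symm
    rw [Finset.sum_congr rfl fun i _ => h1 i, ← hcard,
      Finset.sum_range (fun i => MvPolynomial.eval ((f^[i] (π x)).1) (g L))]
    exact Fintype.sum_bijective _ (cyc_bij f htr (π x))
      _ _ (fun i => rfl)
  have hproj : ∀ j : Fin n, j ≠ L → (σ ^ (p ^ (n - 1))) x j = x j := by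
    intro j hj
    have hit := cyc_iterate_card f htr (π x)
    rw [hcard, hfk] at hit
    calc (σ ^ (p ^ (n - 1))) x j = (π ((σ ^ (p ^ (n - 1))) x)).1 j := (hπ1 _ j hj).symm
      _ = (π x).1 j := by rw [hit]
      _ = x j := hπ1 _ j hj
  funext j
  by_cases hj : j = L
  · subst hj
    rw [Function.update_self, hlast, hsum,
      aux_hyperplane_sum p n L hLmax (g L) h0 (hg L).2.1]
  · rw [Function.update_of_ne hj]
    exact hproj j hj
end

section
/- If σ ∈ 𝔹_n(𝔽_p) has a single orbit of length pⁿ, then there is exactly one σ' equivalent to σ (i.e. generating the same cyclic subgroup ⟨σ⟩) which is in standard form, meaning σ'(0,…,0) = (1,0,…,0). -/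
/-- A strictly triangular map preserves "agreement below `i`". -/
lemma ST.agree {p n : ℕ} {σ : Equiv.Perm (Fin n → ZMod p)}
    (hσ : StrictlyTriangular p n σ) {x y : Fin n → ZMod p} {i : Fin n}
    (h : ∀ j : Fin n, j < i → x j = y j) :
    ∀ j : Fin n, j < i → σ x j = σ y j := by
  intro j hj
  have h1 : σ x j - x j = σ y j - y j :=
    hσ x y j (fun j' hj' => h j' (hj'.trans hj))
  have h2 : x j = y j := h j hj
  have := congrArg (· + x j) h1
  simpa [sub_add_cancel, h2] using this

lemma ST.mul {p n : ℕ} {σ τ : Equiv.Perm (Fin n → ZMod p)}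
    (hσ : StrictlyTriangular p n σ) (hτ : StrictlyTriangular p n τ) :
    StrictlyTriangular p n (σ * τ) := by
  intro x y i h
  have h1 : σ (τ x) i - τ x i = σ (τ y) i - τ y i :=
    hσ (τ x) (τ y) i (fun j hj => ST.agree hτ h j hj)
  have h2 : τ x i - x i = τ y i - y i := hτ x y i h
  have : (σ (τ x) i - τ x i) + (τ x i - x i) = (σ (τ y) i - τ y i) + (τ y i - y i) := by
    rw [h1, h2]
  simpa [Equiv.Perm.mul_apply, sub_add_sub_cancel] using this

lemma ST.one {p n : ℕ} : StrictlyTriangular p n 1 := by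
  intro x y i _; simp

lemma ST.pow {p n : ℕ} {σ : Equiv.Perm (Fin n → ZMod p)}
    (hσ : StrictlyTriangular p n σ) (k : ℕ) :
    StrictlyTriangular p n (σ ^ k) := by
  induction k with
  | zero => simpa using ST.one
  | succ k ih => rw [pow_succ]; exact ST.mul ih hσ

lemma FF.pow {p n m : ℕ} {σ : Equiv.Perm (Fin n → ZMod p)}
    (hσ : FixesFirst p n m σ) (k : ℕ) : FixesFirst p n m (σ ^ k) := by
  induction k with
  | zero => intro x i _; simp
  | succ k ih =>
    intro x i hi
    rw [pow_succ', Equiv.Perm.mul_apply, hσ ((σ ^ k) x) i hi, ih x i hi]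

/-- Key step: if a strictly triangular `σ` fixes the first `m` coordinates, then `σ ^ p`
fixes the first `m + 1` coordinates. -/
lemma FF.step {p n m : ℕ} {σ : Equiv.Perm (Fin n → ZMod p)}
    (hσ : StrictlyTriangular p n σ) (hF : FixesFirst p n m σ) :
    FixesFirst p n (m + 1) (σ ^ p) := by
  have key : ∀ (j : ℕ) (x : Fin n → ZMod p) (i : Fin n), (i : ℕ) = m →
      (σ ^ j) x i = x i + (j : ZMod p) * (σ x i - x i) := by
    intro j
    induction j with
    | zero => intro x i _; simp
    | succ j ih =>
      intro x i hi
      have hagree : ∀ j' : Fin n, j' < i → (σ ^ j) x j' = x j' := fun j' hj' =>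
        FF.pow hF j x j' (by rw [← hi]; exact hj')
      have h1 : σ ((σ ^ j) x) i - (σ ^ j) x i = σ x i - x i :=
        hσ ((σ ^ j) x) x i hagree
      have h2 : (σ ^ (j + 1)) x i = σ ((σ ^ j) x) i := by
        rw [pow_succ', Equiv.Perm.mul_apply]
      rw [h2, ← sub_add_cancel (σ ((σ ^ j) x) i) ((σ ^ j) x i), h1, ih x i hi]
      push_cast
      ring
  intro x i hi
  rcases Nat.lt_or_ge (i : ℕ) m with h | h
  · exact FF.pow hF p x i h
  · have him : (i : ℕ) = m := le_antisymm (by omega) h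
    rw [key p x i him, ZMod.natCast_self, zero_mul, add_zero]

/-- A strictly triangular permutation satisfies `σ ^ (p ^ n) = 1`. -/
lemma ST.pow_prime_pow_eq_one {p n : ℕ} {σ : Equiv.Perm (Fin n → ZMod p)}
    (hσ : StrictlyTriangular p n σ) : σ ^ (p ^ n) = 1 := by
  have main : ∀ m : ℕ, FixesFirst p n m (σ ^ (p ^ m)) := by
    intro m
    induction m with
    | zero => intro x i hi; omega
    | succ m ih =>
      have : σ ^ (p ^ (m + 1)) = (σ ^ (p ^ m)) ^ p := by
        rw [← pow_mul, pow_succ]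
      rw [this]
      exact FF.step (ST.pow hσ _) ih
  refine Equiv.ext fun x => ?_
  have := main n
  show (σ ^ p ^ n) x = x
  exact funext fun i => this x i i.2

/-- If `σ ∈ 𝔹_n(𝔽_p)` has a single orbit of length `pⁿ`, then there is exactly one
`σ' ∈ 𝔹_n(𝔽_p)` equivalent to `σ` (generating the same cyclic subgroup `⟨σ⟩`) which is in
standard form, i.e. `σ'(0, …, 0) = (1, 0, …, 0)`. -/
theorem unique_standard_form_representative (p n : ℕ) [Fact p.Prime] (hn : 0 < n)
    (σ : Equiv.Perm (Fin n → ZMod p)) (hσ : StrictlyTriangular p n σ)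
    (horb : ∀ x y : Fin n → ZMod p, ∃ k : ℕ, (σ ^ k) x = y) :
    ∃! σ' : Equiv.Perm (Fin n → ZMod p),
      StrictlyTriangular p n σ' ∧
      Subgroup.zpowers σ' = Subgroup.zpowers σ ∧
      σ' (0 : Fin n → ZMod p) = Function.update (0 : Fin n → ZMod p) ⟨0, hn⟩ 1 := by
  have hp : p.Prime := Fact.out
  set i0 : Fin n := ⟨0, hn⟩ with hi0
  set e1 : Fin n → ZMod p := Function.update (0 : Fin n → ZMod p) i0 1 with he1
  obtain ⟨k, hk⟩ := horb 0 e1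
  -- first coordinate of σ^j 0 is j • c where c = σ 0 i0
  have hfirst : ∀ (j : ℕ) (x : Fin n → ZMod p), (σ ^ j) x i0 = x i0 + (j : ZMod p) * (σ 0 i0) := by
    intro j x
    induction j with
    | zero => simp
    | succ j ih =>
      have h1 : σ ((σ ^ j) x) i0 - (σ ^ j) x i0 = σ 0 i0 - (0 : Fin n → ZMod p) i0 :=
        hσ ((σ ^ j) x) 0 i0 (fun j' hj' => absurd hj' (by simp [hi0, Fin.lt_def]))
      have h2 : (σ ^ (j + 1)) x i0 = σ ((σ ^ j) x) i0 := by
        rw [pow_succ', Equiv.Perm.mul_apply]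
      rw [h2, ← sub_add_cancel (σ ((σ ^ j) x) i0) ((σ ^ j) x i0), h1, ih]
      push_cast
      simp only [Pi.zero_apply, sub_zero]
      ring
  -- p does not divide k
  have hkc : (k : ZMod p) * (σ 0 i0) = 1 := by
    have := hfirst k 0
    rw [hk] at this
    simp only [Pi.zero_apply, zero_add] at this
    rw [← this, he1, Function.update_self]
  have hpk : ¬ p ∣ k := by
    intro hdvd
    rw [(ZMod.natCast_eq_zero_iff k p).mpr hdvd, zero_mul] at hkc
    exact zero_ne_one hkc
  -- order of σ divides p ^ n, hence coprime to k
  have hord : orderOf σ ∣ p ^ n := orderOf_dvd_of_pow_eq_one (ST.pow_prime_pow_eq_one hσ)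
  have hcop : (orderOf σ).Coprime k := by
    have h1 : p.Coprime k := (Nat.Prime.coprime_iff_not_dvd hp).mpr hpk
    exact Nat.Coprime.coprime_dvd_left hord (Nat.Coprime.pow_left n h1)
  -- zpowers (σ ^ k) = zpowers σ
  have hle : Subgroup.zpowers (σ ^ k) ≤ Subgroup.zpowers σ :=
    Subgroup.zpowers_le.mpr (Subgroup.pow_mem _ (Subgroup.mem_zpowers σ) k)
  have hordk : orderOf (σ ^ k) = orderOf σ := by
    rw [orderOf_pow, Nat.Coprime.gcd_eq_one hcop, Nat.div_one]
  have hzp : Subgroup.zpowers (σ ^ k) = Subgroup.zpowers σ := by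
    apply Subgroup.eq_of_le_of_card_ge hle
    rw [Nat.card_zpowers, Nat.card_zpowers, hordk]
  -- uniqueness helper: elements of zpowers σ agreeing at 0 are equal
  have huniq : ∀ τ₁ τ₂ : Equiv.Perm (Fin n → ZMod p), τ₁ ∈ Subgroup.zpowers σ →
      τ₂ ∈ Subgroup.zpowers σ → τ₁ 0 = τ₂ 0 → τ₁ = τ₂ := by
    intro τ₁ τ₂ h₁ h₂ h0
    obtain ⟨a, ha'⟩ := h₁
    obtain ⟨b, hb'⟩ := h₂
    have ha : σ ^ a = τ₁ := ha'
    have hb : σ ^ b = τ₂ := hb'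
    refine Equiv.ext fun x => ?_
    obtain ⟨j, hj⟩ := horb 0 x
    have comm : ∀ c : ℤ, (σ ^ c) ((σ ^ j) 0) = (σ ^ j) ((σ ^ c) 0) := by
      intro c
      rw [← zpow_natCast σ j, ← Equiv.Perm.mul_apply, ← Equiv.Perm.mul_apply,
        ← zpow_add, ← zpow_add, add_comm]
    calc τ₁ x = (σ ^ a) ((σ ^ j) 0) := by rw [ha, hj]
      _ = (σ ^ j) ((σ ^ a) 0) := comm a
      _ = (σ ^ j) ((σ ^ b) 0) := by rw [ha, hb, h0]
      _ = (σ ^ b) ((σ ^ j) 0) := (comm b).symm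
      _ = τ₂ x := by rw [hb, hj]
  refine ⟨σ ^ k, ⟨ST.pow hσ k, hzp, hk⟩, ?_⟩
  rintro τ ⟨-, hτz, hτ0⟩
  exact huniq τ (σ ^ k) (hτz ▸ Subgroup.mem_zpowers τ)
    (Subgroup.pow_mem _ (Subgroup.mem_zpowers σ) k) (by rw [hτ0, hk])
end

section
/- Let Δ = (x₁+δ₀, x₂+δ₁, …, x_n+δ_{n−1}) where δᵢ : 𝔽_p^i → 𝔽_p is the indicator function of the point (p−1,…,p−1) (and δ₀ = 1). Under the bijection ζ : ℤ/pⁿℤ → 𝔽_p^n sending a₀ + a₁p + … + a_{n−1}p^{n−1} (0 ≤ aᵢ ≤ p−1) to (a₀,…,a_{n−1}), one has ζ⁻¹ ∘ Δ ∘ ζ equal to the map m ↦ m + 1 on ℤ/pⁿℤ. -/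
lemma digits_inj (p : ℕ) (hp : 1 < p) :
    ∀ n a b, a < p ^ n → b < p ^ n →
      (∀ i, i < n → a / p ^ i % p = b / p ^ i % p) → a = b := by
  intro n
  induction n with
  | zero => intro a b ha hb _; simp at ha hb; omega
  | succ n ih =>
    intro a b ha hb h
    have h0 := h 0 (by omega)
    simp at h0
    have hq : a / p = b / p := by
      apply ih
      · exact Nat.div_lt_of_lt_mul (by rwa [pow_succ, mul_comm] at ha)
      · exact Nat.div_lt_of_lt_mul (by rwa [pow_succ, mul_comm] at hb)
      · intro i hi
        have := h (i + 1) (by omega)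
        rwa [pow_succ, mul_comm, ← Nat.div_div_eq_div_mul, ← Nat.div_div_eq_div_mul] at this
    have h1 := Nat.div_add_mod a p
    have h2 := Nat.div_add_mod b p
    rw [hq] at h1
    omega

lemma carry_iff (p : ℕ) (hp : 1 < p) (a : ℕ) :
    ∀ i, ((∀ j, j < i → a / p ^ j % p = p - 1) ↔ a % p ^ i = p ^ i - 1) := by
  intro i
  induction i with
  | zero => simp [Nat.mod_one]
  | succ i ih =>
    have hpi : 0 < p ^ i := Nat.pow_pos (by omega)
    have hmod : a % p ^ (i + 1) = a % p ^ i + p ^ i * (a / p ^ i % p) := by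
      rw [pow_succ, Nat.mod_mul]
    have hps : p ^ (i + 1) = p ^ i * p := pow_succ p i
    set r := a % p ^ i with hr
    set d := a / p ^ i % p with hd
    have hlt : d < p := Nat.mod_lt _ (by omega)
    have hlt2 : r < p ^ i := Nat.mod_lt _ hpi
    have hone : 1 ≤ p ^ i * p := Nat.one_le_iff_ne_zero.mpr (by positivity)
    constructor
    · intro h
      have h1 : r = p ^ i - 1 := ih.mp (fun j hj => h j (by omega))
      have h2 : d = p - 1 := h i (by omega)
      have hmul : p ^ i * (p - 1) + p ^ i = p ^ i * p := by
        rw [← Nat.mul_succ]; congr 1; omega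
      rw [hmod, hps, h1, h2]
      omega
    · intro h j hj
      rw [hmod, hps] at h
      have hd1 : d = p - 1 := by
        by_contra hc
        have hd2 : d + 2 ≤ p := by omega
        have := Nat.mul_le_mul_left (p ^ i) hd2
        rw [Nat.mul_add] at this
        omega
      have hr1 : r = p ^ i - 1 := by
        rw [hd1] at h
        have hmul : p ^ i * (p - 1) + p ^ i = p ^ i * p := by
          rw [← Nat.mul_succ]; congr 1; omega
        omega
      rcases Nat.lt_succ_iff_lt_or_eq.mp hj with hj | hj
      · exact (ih.mpr hr1) j hj
      · rw [hj]; exact hd1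

lemma pred_mod_iff (k a : ℕ) (hk : 0 < k) : a % k = k - 1 ↔ k ∣ a + 1 := by
  rcases Nat.eq_or_lt_of_le hk with hk1 | hk1
  · simp [← hk1, Nat.mod_one]
  rw [Nat.dvd_iff_mod_eq_zero]
  have h1 : (a + 1) % k = (a % k + 1) % k := by
    conv_lhs => rw [Nat.add_mod, Nat.mod_eq_of_lt hk1]
  have hr : a % k < k := Nat.mod_lt _ hk
  constructor
  · intro h
    rw [h1, h, Nat.sub_add_cancel (by omega), Nat.mod_self]
  · intro h
    rw [h1] at h
    have hdvd : k ∣ a % k + 1 := Nat.dvd_of_mod_eq_zero h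
    have := Nat.le_of_dvd (by omega) hdvd
    omega

lemma cast_eq_iff (p : ℕ) (hp : 1 < p) (x y : ℕ) (hx : x < p) (hy : y < p) :
    (x : ZMod p) = y ↔ x = y := by
  haveI : NeZero p := ⟨by omega⟩
  constructor
  · intro h
    have := congrArg ZMod.val h
    rwa [ZMod.val_cast_of_lt hx, ZMod.val_cast_of_lt hy] at this
  · intro h; rw [h]

open Classical in
/-- Let `Δ = (x₁+δ₀, …, x_n+δ_{n−1})` where `δᵢ` is the indicator function of the point
`(p−1, …, p−1) ∈ 𝔽_p^i` (`δ₀ = 1`). Under the bijection `ζ : ℤ/pⁿℤ → 𝔽_p^n` sending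
`a₀ + a₁p + … + a_{n−1}p^{n−1}` to `(a₀, …, a_{n−1})`, `ζ⁻¹ ∘ Δ ∘ ζ` is the map
`m ↦ m + 1` on `ℤ/pⁿℤ`. -/
theorem delta_conjugate_to_increment (p n : ℕ) [Fact p.Prime] (hn : 0 < n) :
    let ζ : ZMod (p ^ n) → (Fin n → ZMod p) :=
      fun a i => (((a.val / p ^ (i : ℕ)) % p : ℕ) : ZMod p)
    let Δ : (Fin n → ZMod p) → (Fin n → ZMod p) :=
      fun x i => x i +
        if (∀ j : Fin n, j < i → x j = ((p - 1 : ℕ) : ZMod p)) then 1 else 0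
    Function.Bijective ζ ∧ ∀ m : ZMod (p ^ n), Δ (ζ m) = ζ (m + 1) := by
  intro ζ Δ
  have hp : 1 < p := (Fact.out : p.Prime).one_lt
  have hpn : 1 < p ^ n := Nat.one_lt_pow (by omega) hp
  haveI : NeZero (p ^ n) := ⟨by omega⟩
  haveI : Fact (1 < p ^ n) := ⟨hpn⟩
  constructor
  · rw [Fintype.bijective_iff_injective_and_card]
    constructor
    · intro a b hab
      have hv : a.val = b.val := by
        apply digits_inj p hp n _ _ (ZMod.val_lt a) (ZMod.val_lt b)
        intro i hi
        have h := congrFun hab ⟨i, hi⟩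
        exact (cast_eq_iff p hp _ _ (Nat.mod_lt _ (by omega)) (Nat.mod_lt _ (by omega))).mp h
      exact ZMod.val_injective _ hv
    · simp [ZMod.card]
  · intro m
    funext i
    have hin : (i : ℕ) < n := i.isLt
    have hval : (m + 1).val = (m.val + 1) % p ^ n := by
      rw [ZMod.val_add, ZMod.val_one]
    have hsplit : p ^ n = p ^ (i : ℕ) * p ^ (n - (i : ℕ)) := by
      rw [← pow_add]; congr 1; omega
    have hdvdp : p ∣ p ^ (n - (i : ℕ)) := dvd_pow_self p (by omega)
    have key : ((m + 1).val / p ^ (i : ℕ)) % p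
        = (m.val / p ^ (i : ℕ) + if p ^ (i : ℕ) ∣ m.val + 1 then 1 else 0) % p := by
      have h2 := Nat.mod_mul_right_div_self (m.val + 1) (p ^ (i : ℕ)) (p ^ (n - (i : ℕ)))
      rw [← hsplit] at h2
      rw [hval, h2, Nat.mod_mod_of_dvd _ hdvdp, Nat.succ_div]
    have hpi : 0 < p ^ (i : ℕ) := Nat.pow_pos (by omega)
    have hcond : (∀ j : Fin n, j < i → ζ m j = ((p - 1 : ℕ) : ZMod p))
        ↔ p ^ (i : ℕ) ∣ m.val + 1 := by
      rw [← pred_mod_iff _ _ hpi, ← carry_iff p hp m.val (i : ℕ)]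
      constructor
      · intro h j hj
        exact (cast_eq_iff p hp _ _ (Nat.mod_lt _ (by omega)) (by omega)).mp
          (h ⟨j, by omega⟩ hj)
      · intro h j hj
        exact (cast_eq_iff p hp _ _ (Nat.mod_lt _ (by omega)) (by omega)).mpr (h j hj)
    show ζ m i + (if (∀ j : Fin n, j < i → ζ m j = ((p - 1 : ℕ) : ZMod p)) then 1 else 0)
        = ζ (m + 1) i
    rw [if_congr hcond rfl rfl]
    show (↑(m.val / p ^ (i : ℕ) % p) : ZMod p) + _ = ↑((m + 1).val / p ^ (i : ℕ) % p)
    rw [key]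
    by_cases hd : p ^ (i : ℕ) ∣ m.val + 1
    · rw [if_pos hd, if_pos hd, ZMod.natCast_mod, ZMod.natCast_mod, Nat.cast_add, Nat.cast_one]
    · rw [if_neg hd, if_neg hd, add_zero, add_zero]
end
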